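/- arXiv:2303.15902 — 9 statements merged into one kernel-verified Lean document; each statement's English description precedes it below -/
import Mathlib

section
/- Let f ∈ C¹([1,∞)) with f > 0, f' > 0 on [1,∞), and lim_{r→∞} f(r) = +∞. Then for any α, ε > 0, limsup_{r→∞} f(r)^ε · ∫_r^∞ (f(s)/f'(s))^α ds = +∞. -/
open Filter MeasureTheory Set Real
open scoped ENNReal

/-!
Hölder's inequality applied to `1 = (f / f') ^ c * (f' / f) ^ c` on `[r, t]`, together with
`f' / f = (log f)'`, gives `(t - r) ^ (1 + α) ≤ (∫_r^t (f / f') ^ α) * (log f t - log f r) ^ α`.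
If the limsup were finite, then `∫_r^∞ (f / f') ^ α ≤ C f(r) ^ (-ε)` for large `r`, so `g = log f`
satisfies `g t ≥ g r + c (t - r) ^ β exp (k g r)` with `β = (1 + α) / α` and `k = ε / α`.
Such a `g` blows up in finite time: the steps of length `exp (-(k g + log c) / β)` each raise
`g` by at least `1`, so they shrink geometrically, and `g`, which is monotone, would be
unbounded on a bounded interval.
-/

theorem measure_univ_rpow_le_lintegral_rpow_mul_lintegral_inv_rpow {X : Type*}
    [MeasurableSpace X] (μ : Measure X) {φ : X → ℝ≥0∞} (hφ : AEMeasurable φ μ)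
    (h0 : ∀ᵐ x ∂μ, φ x ≠ 0) (htop : ∀ᵐ x ∂μ, φ x ≠ ∞) {a : ℝ} (ha : 0 < a) :
    μ univ ^ (1 + a) ≤ (∫⁻ x, φ x ^ a ∂μ) * (∫⁻ x, (φ x)⁻¹ ∂μ) ^ a := by
  have hpq : (1 + a).HolderConjugate ((1 + a) / a) := by
    rw [Real.holderConjugate_iff]
    refine ⟨by linarith, ?_⟩
    field_simp
  set c := a / (1 + a)
  have hc : 0 < c := by positivity
  -- Hölder with exponents `1 + a` and `(1 + a) / a` applied to `1 = φ ^ c * φ⁻¹ ^ c`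
  have hone : (fun x => φ x ^ c * (φ x)⁻¹ ^ c) =ᵐ[μ] fun _ => 1 := by
    filter_upwards [h0, htop] with x hx0 hxtop
    rw [ENNReal.inv_rpow]
    exact ENNReal.mul_inv_cancel (ENNReal.rpow_pos (pos_iff_ne_zero.2 hx0) hxtop).ne'
      (ENNReal.rpow_ne_top_of_nonneg hc.le hxtop)
  have holder := ENNReal.lintegral_mul_le_Lp_mul_Lq μ hpq (hφ.pow_const c) (hφ.inv.pow_const c)
  simp only [Pi.mul_apply, Pi.inv_apply] at holder
  rw [lintegral_congr_ae hone, lintegral_one] at holder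
  have hp : c * (1 + a) = a := div_mul_cancel₀ a (by positivity)
  have hq : c * ((1 + a) / a) = 1 := by rw [div_mul_div_cancel₀' ha.ne', div_self (by positivity)]
  calc μ univ ^ (1 + a)
      ≤ ((∫⁻ x, (φ ^ c) x ^ (1 + a) ∂μ) ^ (1 / (1 + a)) *
          (∫⁻ x, (φ⁻¹ ^ c) x ^ ((1 + a) / a) ∂μ) ^ (1 / ((1 + a) / a))) ^ (1 + a) :=
        ENNReal.rpow_le_rpow holder (by linarith)
    _ = (∫⁻ x, φ x ^ a ∂μ) * (∫⁻ x, (φ x)⁻¹ ∂μ) ^ a := by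
        simp only [Pi.pow_apply, Pi.inv_apply, ← ENNReal.rpow_mul, hp, hq, ENNReal.rpow_one]
        rw [ENNReal.mul_rpow_of_nonneg _ _ (by linarith), ← ENNReal.rpow_mul, ← ENNReal.rpow_mul,
          one_div_mul_cancel (by positivity), ENNReal.rpow_one,
          show 1 / ((1 + a) / a) * (1 + a) = a by field_simp]

theorem monotoneOn_Icc_of_hasDerivAt_nonneg {g g' : ℝ → ℝ} {r t : ℝ}
    (hderiv : ∀ x ∈ Icc r t, HasDerivAt g (g' x) x) (hg' : ∀ x ∈ Icc r t, 0 ≤ g' x) :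
    MonotoneOn g (Icc r t) :=
  monotoneOn_of_hasDerivWithinAt_nonneg (convex_Icc r t)
    (fun x hx => (hderiv x hx).continuousAt.continuousWithinAt)
    (fun x hx => (hderiv x (interior_subset hx)).hasDerivWithinAt)
    (fun x hx => hg' x (interior_subset hx))

theorem setLIntegral_Ioc_ofReal_deriv_le_sub {g g' : ℝ → ℝ} {r t : ℝ}
    (hderiv : ∀ x ∈ Icc r t, HasDerivAt g (g' x) x) (hg' : ∀ x ∈ Icc r t, 0 ≤ g' x) :
    ∫⁻ x in Ioc r t, ENNReal.ofReal (g' x) ≤ ENNReal.ofReal (g t - g r) := by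
  have hmono := monotoneOn_Icc_of_hasDerivAt_nonneg hderiv hg'
  rw [lintegral_deriv_eq_volume_image_of_monotoneOn measurableSet_Ioc
    (fun x hx => (hderiv x (Ioc_subset_Icc_self hx)).hasDerivWithinAt)
    (hmono.mono Ioc_subset_Icc_self), ← Real.volume_Icc]
  refine measure_mono (image_subset_iff.2 fun x hx => ?_)
  have hrt : r ≤ t := hx.1.le.trans hx.2
  exact ⟨hmono ⟨le_rfl, hrt⟩ (Ioc_subset_Icc_self hx) hx.1.le,
    hmono (Ioc_subset_Icc_self hx) ⟨hrt, le_rfl⟩ hx.2⟩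

theorem aemeasurable_restrict_of_hasDerivAt {f f' : ℝ → ℝ} {s : Set ℝ} (hs : MeasurableSet s)
    (hderiv : ∀ x ∈ s, HasDerivAt f (f' x) x) : AEMeasurable f' (volume.restrict s) :=
  (measurable_deriv f).aemeasurable.congr
    (ae_restrict_of_forall_mem hs fun x hx => (hderiv x hx).deriv)

theorem log_le_log_of_hasDerivAt_pos {f f' : ℝ → ℝ} {r t : ℝ} (hrt : r ≤ t)
    (hderiv : ∀ x ∈ Icc r t, HasDerivAt f (f' x) x) (hfpos : ∀ x ∈ Icc r t, 0 < f x)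
    (hf'pos : ∀ x ∈ Icc r t, 0 < f' x) :
    log (f r) ≤ log (f t) :=
  log_le_log (hfpos r ⟨le_rfl, hrt⟩) <|
    monotoneOn_Icc_of_hasDerivAt_nonneg hderiv (fun x hx => (hf'pos x hx).le)
      ⟨le_rfl, hrt⟩ ⟨hrt, le_rfl⟩ hrt

theorem ofReal_rpow_sub_le_setLIntegral_mul_log_sub {f f' : ℝ → ℝ} {α r t : ℝ} (hα : 0 < α)
    (hrt : r ≤ t) (hderiv : ∀ x ∈ Icc r t, HasDerivAt f (f' x) x)
    (hfpos : ∀ x ∈ Icc r t, 0 < f x) (hf'pos : ∀ x ∈ Icc r t, 0 < f' x) :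
    ENNReal.ofReal ((t - r) ^ (1 + α)) ≤
      (∫⁻ s in Ioc r t, ENNReal.ofReal ((f s / f' s) ^ α)) *
        ENNReal.ofReal ((log (f t) - log (f r)) ^ α) := by
  have hIoc : Ioc r t ⊆ Icc r t := Ioc_subset_Icc_self
  have hpos : ∀ s ∈ Ioc r t, 0 < f s / f' s := fun s hs =>
    div_pos (hfpos s (hIoc hs)) (hf'pos s (hIoc hs))
  have hf : AEMeasurable f (volume.restrict (Ioc r t)) :=
    ContinuousOn.aemeasurable (fun x hx => (hderiv x (hIoc hx)).continuousAt.continuousWithinAt)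
      measurableSet_Ioc
  have hf' := aemeasurable_restrict_of_hasDerivAt measurableSet_Ioc fun x hx => hderiv x (hIoc hx)
  have holder := measure_univ_rpow_le_lintegral_rpow_mul_lintegral_inv_rpow _
    (φ := fun s => ENNReal.ofReal (f s / f' s)) (ENNReal.measurable_ofReal.comp_aemeasurable (hf.div hf'))
    (ae_restrict_of_forall_mem measurableSet_Ioc fun s hs => (ENNReal.ofReal_pos.2 (hpos s hs)).ne')
    (ae_of_all _ fun _ => ENNReal.ofReal_ne_top) hα
  have hlog := setLIntegral_Ioc_ofReal_deriv_le_sub (g := fun x => log (f x))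
    (fun x hx => (hderiv x hx).log (hfpos x hx).ne')
    (fun x hx => (div_pos (hf'pos x hx) (hfpos x hx)).le)
  have hL : 0 ≤ log (f t) - log (f r) :=
    sub_nonneg.2 (log_le_log_of_hasDerivAt_pos hrt hderiv hfpos hf'pos)
  calc ENNReal.ofReal ((t - r) ^ (1 + α))
      = volume.restrict (Ioc r t) univ ^ (1 + α) := by
        rw [Measure.restrict_apply_univ, Real.volume_Ioc,
          ENNReal.ofReal_rpow_of_nonneg (sub_nonneg.2 hrt) (by linarith)]
    _ ≤ _ := holder
    _ = (∫⁻ s in Ioc r t, ENNReal.ofReal ((f s / f' s) ^ α)) *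
          (∫⁻ s in Ioc r t, ENNReal.ofReal (f' s / f s)) ^ α := by
        congr 1
        · exact setLIntegral_congr_fun measurableSet_Ioc fun s hs =>
            ENNReal.ofReal_rpow_of_nonneg (hpos s hs).le hα.le
        · congr 1
          refine setLIntegral_congr_fun measurableSet_Ioc fun s hs => ?_
          rw [← ENNReal.ofReal_inv_of_pos (hpos s hs), inv_div]
    _ ≤ (∫⁻ s in Ioc r t, ENNReal.ofReal ((f s / f' s) ^ α)) *
          ENNReal.ofReal (log (f t) - log (f r)) ^ α := by
        gcongr
    _ = _ := by rw [ENNReal.ofReal_rpow_of_nonneg hL hα.le]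

theorem log_add_mul_rpow_mul_exp_le_log {f f' : ℝ → ℝ} {α ε C r t : ℝ} (hα : 0 < α)
    (hC : 0 < C) (hrt : r ≤ t) (hderiv : ∀ x ∈ Icc r t, HasDerivAt f (f' x) x)
    (hfpos : ∀ x ∈ Icc r t, 0 < f x) (hf'pos : ∀ x ∈ Icc r t, 0 < f' x)
    (hbound : ENNReal.ofReal (f r ^ ε) * ∫⁻ s in Ioi r, ENNReal.ofReal ((f s / f' s) ^ α) ≤
      ENNReal.ofReal C) :
    log (f r) + C ^ (-α⁻¹) * (t - r) ^ ((1 + α) / α) * exp (ε / α * log (f r)) ≤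
      log (f t) := by
  have hfr : 0 < f r := hfpos r ⟨le_rfl, hrt⟩
  have hL : 0 ≤ log (f t) - log (f r) :=
    sub_nonneg.2 (log_le_log_of_hasDerivAt_pos hrt hderiv hfpos hf'pos)
  set L := log (f t) - log (f r)
  have hreal : f r ^ ε * (t - r) ^ (1 + α) ≤ C * L ^ α := by
    rw [← ENNReal.ofReal_le_ofReal_iff (by positivity), ENNReal.ofReal_mul (by positivity),
      ENNReal.ofReal_mul hC.le]
    calc ENNReal.ofReal (f r ^ ε) * ENNReal.ofReal ((t - r) ^ (1 + α))
        ≤ ENNReal.ofReal (f r ^ ε) * ((∫⁻ s in Ioi r, ENNReal.ofReal ((f s / f' s) ^ α)) *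
            ENNReal.ofReal (L ^ α)) := by
          gcongr
          refine (ofReal_rpow_sub_le_setLIntegral_mul_log_sub hα hrt hderiv hfpos hf'pos).trans ?_
          exact mul_le_mul_left (lintegral_mono_set Ioc_subset_Ioi_self) _
      _ ≤ ENNReal.ofReal C * ENNReal.ofReal (L ^ α) := by
          rw [← mul_assoc]
          gcongr
  have hroot := rpow_le_rpow (by positivity) hreal (inv_nonneg.2 hα.le)
  rw [mul_rpow (by positivity) (by positivity), mul_rpow hC.le (by positivity), ← rpow_mul hfr.le,
    ← rpow_mul (sub_nonneg.2 hrt), ← rpow_mul hL, mul_inv_cancel₀ hα.ne', rpow_one] at hroot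
  rw [← le_sub_iff_add_le', rpow_neg hC.le, mul_comm (ε / α), ← rpow_def_of_pos hfr,
    mul_assoc, inv_mul_le_iff₀ (by positivity), mul_comm ((t - r) ^ _)]
  simpa only [div_eq_mul_inv] using hroot

theorem not_forall_add_mul_rpow_mul_exp_le {g : ℝ → ℝ} {c k β : ℝ} (hc : 0 < c) (hk : 0 < k)
    (hβ : 0 < β) (R : ℝ) :
    ¬ ∀ r t, R ≤ r → r ≤ t → g r + c * (t - r) ^ β * exp (k * g r) ≤ g t := by
  intro hg
  have hmono : ∀ r t, R ≤ r → r ≤ t → g r ≤ g t := fun r t hr hrt =>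
    (le_add_of_nonneg_right (by positivity)).trans (hg r t hr hrt)
  set step : ℝ → ℝ := fun x => exp (-(k * g x + log c) / β)
  have hstep : ∀ x, R ≤ x → g x + 1 ≤ g (x + step x) := by
    intro x hx
    have h := hg x (x + step x) hx (le_add_of_nonneg_right (exp_pos _).le)
    have hone : c * step x ^ β * exp (k * g x) = 1 := by
      rw [← Real.exp_mul, div_mul_cancel₀ _ hβ.ne', neg_add, exp_add, exp_neg, exp_neg,
        exp_log hc]
      field_simp
    rwa [add_sub_cancel_left, hone] at h
  set q := exp (-k / β)
  set D := step R
  have hq : q < 1 := exp_lt_one_iff.2 (div_neg_of_neg_of_pos (neg_neg_iff_pos.2 hk) hβ)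
  have hstep_le : ∀ (n : ℕ) x, g R + n ≤ g x → step x ≤ D * q ^ n := by
    intro n x hx
    rw [← exp_nat_mul, ← exp_add]
    refine exp_le_exp.2 ?_
    rw [show -(k * g R + log c) / β + n * (-k / β) = -(k * (g R + n) + log c) / β by ring]
    gcongr
  have hreach : ∀ n : ℕ, ∃ x, R ≤ x ∧ x + D * q ^ n / (1 - q) ≤ R + D / (1 - q) ∧
      g R + n ≤ g x := by
    intro n
    induction n with
    | zero => exact ⟨R, le_rfl, by simp, by simp⟩
    | succ n ih =>
      obtain ⟨x, hRx, hxT, hgx⟩ := ih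
      refine ⟨x + step x, by linarith [exp_pos (-(k * g x + log c) / β)], ?_, ?_⟩
      · have hsplit : D * q ^ n / (1 - q) = D * q ^ n + D * q ^ (n + 1) / (1 - q) := by
          field_simp [(sub_pos.2 hq).ne']
          ring
        linarith [hstep_le n x hgx]
      · push_cast
        linarith [hstep x hRx]
  obtain ⟨n, hn⟩ := exists_nat_gt (g (R + D / (1 - q)) - g R)
  obtain ⟨x, hRx, hxT, hgx⟩ := hreach n
  have htail : 0 ≤ D * q ^ n / (1 - q) := div_nonneg (by positivity) (sub_pos.2 hq).le
  linarith [hmono x (R + D / (1 - q)) hRx (by linarith)]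

theorem limsup_rpow_mul_integral_eq_top_general
    (f f' : ℝ → ℝ)
    (hderiv : ∀ x ∈ Ici (1:ℝ), HasDerivAt f (f' x) x)
    (hfpos : ∀ x ∈ Ici (1:ℝ), 0 < f x)
    (hf'pos : ∀ x ∈ Ici (1:ℝ), 0 < f' x)
    (α ε : ℝ) (hα : 0 < α) (hε : 0 < ε) :
    Filter.limsup
      (fun r : ℝ =>
        ENNReal.ofReal (f r ^ ε) *
          ∫⁻ s in Ioi r, ENNReal.ofReal ((f s / f' s) ^ α))
      atTop = ⊤ := by
  by_contra hne
  obtain ⟨b, hlt, hb⟩ := exists_between (lt_top_iff_ne_top.2 hne)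
  have hC : 0 < b.toReal := ENNReal.toReal_pos (zero_le.trans_lt hlt).ne' hb.ne
  obtain ⟨R, hR⟩ :=
    eventually_atTop.1 ((eventually_lt_of_limsup_lt hlt).and (eventually_ge_atTop 1))
  refine not_forall_add_mul_rpow_mul_exp_le (g := fun x => log (f x)) (β := (1 + α) / α)
    (rpow_pos_of_pos hC (-α⁻¹)) (div_pos hε hα) (by positivity) R fun r t hr hrt => ?_
  have hIcc : Icc r t ⊆ Ici 1 := fun x hx => (hR r hr).2.trans hx.1
  exact log_add_mul_rpow_mul_exp_le_log hα hC hrt (fun x hx => hderiv x (hIcc hx))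
    (fun x hx => hfpos x (hIcc hx)) (fun x hx => hf'pos x (hIcc hx))
    ((hR r hr).1.le.trans (ENNReal.ofReal_toReal hb.ne).ge)

/-- If `f ∈ C¹([1,∞))` with `f > 0`, `f' > 0` and `f → ∞`, then for any `α, ε > 0`,
`limsup_{r→∞} f(r)^ε ∫_r^∞ (f/f')^α ds = +∞`. -/
theorem limsup_rpow_mul_integral_eq_top
    (f f' : ℝ → ℝ)
    (hderiv : ∀ x ∈ Ici (1:ℝ), HasDerivAt f (f' x) x)
    (hf'cont : ContinuousOn f' (Ici (1:ℝ)))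
    (hfpos : ∀ x ∈ Ici (1:ℝ), 0 < f x)
    (hf'pos : ∀ x ∈ Ici (1:ℝ), 0 < f' x)
    (htop : Tendsto f atTop atTop)
    (α ε : ℝ) (hα : 0 < α) (hε : 0 < ε) :
    Filter.limsup
      (fun r : ℝ =>
        ENNReal.ofReal (f r ^ ε) *
          ∫⁻ s in Ioi r, ENNReal.ofReal ((f s / f' s) ^ α))
      atTop = ⊤ :=
  limsup_rpow_mul_integral_eq_top_general f f' hderiv hfpos hf'pos α ε hα hε
end

section
/- Let g : [T,∞) → ℝ be C¹ with g' > 0, and suppose g is surjective onto [1,∞) (equivalently g(T)=1 and g(t) → ∞). If there exist constants C > 0, α > 0, ε > 0 such that t^{α+ε} ∫_t^∞ (g'(τ))^{α+1} dτ ≤ C for all t ≥ T, then by Hölder's inequality ∫_t^{2t} g'(τ) dτ ≤ C^{1/(α+1)} t^{-ε/(α+1)} for all t ≥ T, and consequently ∫_T^∞ g'(τ) dτ < ∞, contradicting surjectivity of g onto [1,∞). Hence no such constant C exists. -/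
/-!
By Hölder's inequality on the block `[t, 2t)`, the tail bound
`t^(α+ε) ∫_t^∞ (g')^(α+1) ≤ C` gives `∫_t^{2t} g' ≤ C^(1/(α+1)) t^(-ε/(α+1))`. Summing over the
dyadic blocks `[2ⁿT, 2ⁿ⁺¹T)` gives a convergent geometric series, so `∫_T^∞ g' < ∞`, and by
the fundamental theorem of calculus `g` is bounded on `[T, ∞)`, so it cannot map onto `[1, ∞)`.
-/

open MeasureTheory Set
open scoped ENNReal

theorem ENNReal.lintegral_le_lintegral_rpow_mul_measure_univ {α : Type*} [MeasurableSpace α]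
    {μ : Measure α} {f : α → ℝ≥0∞} (hf : AEMeasurable f μ) {p q : ℝ} (hpq : p.HolderConjugate q) :
    ∫⁻ x, f x ∂μ ≤ (∫⁻ x, f x ^ p ∂μ) ^ (1 / p) * μ univ ^ (1 / q) := by
  simpa using ENNReal.lintegral_mul_le_Lp_mul_Lq μ hpq hf (aemeasurable_const (b := 1))

theorem Ici_subset_iUnion_Ico_two_pow_mul {a : ℝ} (ha : 0 < a) :
    Ici a ⊆ ⋃ n : ℕ, Ico (2 ^ n * a) (2 * (2 ^ n * a)) := by
  intro x hx
  obtain ⟨n, hn, hn'⟩ := exists_nat_pow_near ((one_le_div ha).2 hx) one_lt_two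
  refine mem_iUnion.2 ⟨n, ?_, ?_⟩
  · rwa [le_div_iff₀ ha] at hn
  · rwa [div_lt_iff₀ ha, pow_succ', mul_assoc] at hn'

theorem lintegral_Ici_lt_top_of_lintegral_Ico_two_mul_le {f : ℝ → ℝ≥0∞} {a δ : ℝ} {c : ℝ≥0∞}
    (ha : 0 < a) (hδ : 0 < δ) (hc : c ≠ ∞)
    (hf : ∀ t ≥ a, ∫⁻ x in Ico t (2 * t), f x ≤ c * ENNReal.ofReal t ^ (-δ)) :
    ∫⁻ x in Ici a, f x < ∞ := by
  set r : ℝ≥0∞ := 2 ^ (-δ)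
  have hr : r < 1 := ENNReal.rpow_lt_one_of_one_lt_of_neg ENNReal.one_lt_two (neg_neg_of_pos hδ)
  have hblock (n : ℕ) : ∫⁻ x in Ico (2 ^ n * a) (2 * (2 ^ n * a)), f x
      ≤ c * ENNReal.ofReal a ^ (-δ) * r ^ n := by
    refine (hf _ (le_mul_of_one_le_left ha.le (one_le_pow₀ one_le_two))).trans_eq ?_
    rw [ENNReal.ofReal_mul (by positivity), ENNReal.mul_rpow_of_ne_zero (by simp) (by simpa),
      ENNReal.ofReal_pow zero_le_two, ENNReal.ofReal_ofNat, ← ENNReal.rpow_natCast_mul,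
      mul_comm (n : ℝ), ENNReal.rpow_mul_natCast]
    ring
  calc ∫⁻ x in Ici a, f x
      ≤ ∫⁻ x in ⋃ n : ℕ, Ico (2 ^ n * a) (2 * (2 ^ n * a)), f x :=
        lintegral_mono_set (Ici_subset_iUnion_Ico_two_pow_mul ha)
    _ ≤ ∑' n : ℕ, ∫⁻ x in Ico (2 ^ n * a) (2 * (2 ^ n * a)), f x := lintegral_iUnion_le _ _
    _ ≤ ∑' n : ℕ, c * ENNReal.ofReal a ^ (-δ) * r ^ n := ENNReal.tsum_le_tsum hblock
    _ = c * ENNReal.ofReal a ^ (-δ) * ∑' n : ℕ, r ^ n := ENNReal.tsum_mul_left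
    _ < ∞ := by
      have ha' : ENNReal.ofReal a ^ (-δ) ≠ ∞ :=
        ENNReal.rpow_ne_top_of_ne_zero (by simpa) ENNReal.ofReal_ne_top
      exact ENNReal.mul_lt_top (ENNReal.mul_lt_top hc.lt_top ha'.lt_top)
        (tsum_geometric_lt_top.2 hr)

theorem lintegral_Ico_two_mul_le_of_tail_bound {f : ℝ → ℝ≥0∞} {p q β t : ℝ} {C : ℝ≥0∞}
    (hpq : p.HolderConjugate q) (ht : 0 < t)
    (hf : AEMeasurable f (volume.restrict (Ico t (2 * t))))
    (htail : ENNReal.ofReal t ^ β * ∫⁻ x in Ioi t, f x ^ p ≤ C) :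
    ∫⁻ x in Ico t (2 * t), f x ≤ C ^ (1 / p) * ENNReal.ofReal t ^ (1 / q - β / p) := by
  set s := ENNReal.ofReal t
  have hs0 : s ≠ 0 := by simpa [s] using ht
  have hsβ0 : s ^ β ≠ 0 := (ENNReal.rpow_pos (pos_iff_ne_zero.2 hs0) ENNReal.ofReal_ne_top).ne'
  have hsβtop : s ^ β ≠ ∞ := ENNReal.rpow_ne_top_of_ne_zero hs0 ENNReal.ofReal_ne_top
  have htail' : ∫⁻ x in Ici t, f x ^ p ≤ C * s ^ (-β) := by
    rw [setLIntegral_congr Ioi_ae_eq_Ici.symm, ENNReal.rpow_neg, ← div_eq_mul_inv,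
      ENNReal.le_div_iff_mul_le (.inl hsβ0) (.inl hsβtop), mul_comm]
    exact htail
  calc ∫⁻ x in Ico t (2 * t), f x
      ≤ (∫⁻ x in Ico t (2 * t), f x ^ p) ^ (1 / p) * volume (Ico t (2 * t)) ^ (1 / q) := by
        simpa using ENNReal.lintegral_le_lintegral_rpow_mul_measure_univ hf hpq
    _ ≤ (C * s ^ (-β)) ^ (1 / p) * s ^ (1 / q) := by
        rw [Real.volume_Ico, show 2 * t - t = t by ring]
        gcongr
        exacts [hpq.one_div_nonneg, (lintegral_mono_set Ico_subset_Ici_self).trans htail']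
    _ = C ^ (1 / p) * s ^ (1 / q - β / p) := by
        rw [ENNReal.mul_rpow_of_nonneg _ _ hpq.one_div_nonneg, ← ENNReal.rpow_mul,
          mul_assoc, ← ENNReal.rpow_add _ _ hs0 ENNReal.ofReal_ne_top]
        congr 2
        ring

theorem bddAbove_image_Ici_of_lintegral_deriv_ne_top {g g' : ℝ → ℝ} {a : ℝ}
    (hderiv : ∀ x ∈ Ici a, HasDerivAt g (g' x) x) (hcont : ContinuousOn g' (Ici a))
    (hnonneg : ∀ x ∈ Ici a, 0 ≤ g' x) (hfin : ∫⁻ x in Ici a, ENNReal.ofReal (g' x) ≠ ∞) :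
    BddAbove (g '' Ici a) := by
  refine ⟨g a + (∫⁻ x in Ici a, ENNReal.ofReal (g' x)).toReal, ?_⟩
  rintro _ ⟨x, hx, rfl⟩
  have hsub : Ioc a x ⊆ Ici a := Ioc_subset_Ioi_self.trans Ioi_subset_Ici_self
  have hftc : g x - g a = ∫ y in Ioc a x, g' y := by
    rw [← intervalIntegral.integral_of_le hx]
    have huIcc : uIcc a x ⊆ Ici a := by
      rw [uIcc_of_le hx]
      exact Icc_subset_Ici_self
    exact (intervalIntegral.integral_eq_sub_of_hasDerivAt
      (fun y hy => hderiv y (huIcc hy)) (hcont.mono huIcc).intervalIntegrable).symm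
  have hlin : ∫ y in Ioc a x, g' y = (∫⁻ y in Ioc a x, ENNReal.ofReal (g' y)).toReal :=
    integral_eq_lintegral_of_nonneg_ae
      ((ae_restrict_iff' measurableSet_Ioc).2 (.of_forall fun y hy => hnonneg y (hsub hy)))
      ((hcont.mono hsub).aestronglyMeasurable measurableSet_Ioc)
  have hmono := ENNReal.toReal_mono hfin
    (lintegral_mono_set hsub (f := fun y => ENNReal.ofReal (g' y)))
  simp only [mem_Ici] at hx ⊢
  linarith

/-- If `g : [T,∞) → [1,∞)` is a C¹ increasing surjection onto `[1,∞)`, then there is no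
constant `C > 0` with `t^(α+ε) ∫_t^∞ (g'(τ))^(α+1) dτ ≤ C` for all `t ≥ T`. -/
theorem no_uniform_bound_for_surjective_antiderivative
    (T : ℝ) (hT : 1 ≤ T) (g g' : ℝ → ℝ)
    (hderiv : ∀ x ∈ Ici T, HasDerivAt g (g' x) x)
    (hg'cont : ContinuousOn g' (Ici T))
    (hg'pos : ∀ x ∈ Ici T, 0 < g' x)
    (hsurj : g '' (Ici T) = Ici (1:ℝ))
    (α ε : ℝ) (hα : 0 < α) (hε : 0 < ε) :
    ¬ ∃ C : ℝ, 0 < C ∧ ∀ t ≥ T,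
        ENNReal.ofReal (t ^ (α + ε)) *
            ∫⁻ τ in Ioi t, ENNReal.ofReal (g' τ ^ (α + 1)) ≤
          ENNReal.ofReal C := by
  rintro ⟨C, -, hbound⟩
  have hT0 : 0 < T := one_pos.trans_le hT
  have hpq : (α + 1).HolderConjugate ((α + 1) / α) :=
    Real.holderConjugate_iff.2 ⟨by linarith, by field_simp; ring⟩
  have hblock : ∀ t ≥ T, ∫⁻ x in Ico t (2 * t), ENNReal.ofReal (g' x)
      ≤ ENNReal.ofReal C ^ (1 / (α + 1)) * ENNReal.ofReal t ^ (-(ε / (α + 1))) := by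
    intro t ht
    have ht0 : 0 < t := hT0.trans_le ht
    have hsub : Ioi t ⊆ Ici T := Ioi_subset_Ici_self.trans (Ici_subset_Ici.2 ht)
    have htail : ENNReal.ofReal t ^ (α + ε) * ∫⁻ x in Ioi t, ENNReal.ofReal (g' x) ^ (α + 1)
        ≤ ENNReal.ofReal C := by
      rw [ENNReal.ofReal_rpow_of_pos ht0, setLIntegral_congr_fun measurableSet_Ioi
        fun x hx => ENNReal.ofReal_rpow_of_pos (hg'pos x (hsub hx))]
      exact hbound t ht
    have hmeas : AEMeasurable (fun x => ENNReal.ofReal (g' x)) (volume.restrict (Ico t (2 * t))) :=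
      ((hg'cont.mono (Ico_subset_Ici_self.trans (Ici_subset_Ici.2 ht))).aemeasurable
        measurableSet_Ico).ennreal_ofReal
    -- with `p = α + 1` and `q = p / α`, the exponent `1/q - (α + ε)/p` is `-ε/p`
    convert lintegral_Ico_two_mul_le_of_tail_bound hpq ht0 hmeas htail using 3
    field_simp
    ring
  have hfin := lintegral_Ici_lt_top_of_lintegral_Ico_two_mul_le hT0 (by positivity)
    (ENNReal.rpow_ne_top_of_nonneg (by positivity) ENNReal.ofReal_ne_top) hblock
  have hbdd := bddAbove_image_Ici_of_lintegral_deriv_ne_top hderiv hg'cont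
    (fun x hx => (hg'pos x hx).le) hfin.ne
  rw [hsurj] at hbdd
  exact not_bddAbove_Ici 1 hbdd
end

section
/- Let ψ : [0,∞) → ℝ be C¹, positive on (0,∞), with ψ(0)=0, ψ'(0)=1, and define Θ(r) = ψ(r)^{1-n} ∫_0^r ψ(s)^{n-1} ds. Suppose Θ ∉ L¹(0,∞). Let (u,v) be a globally positive radial solution of the system ψ^{n-1}u' (r) = -∫_0^r v^q ψ^{n-1} ds, ψ^{n-1}v'(r) = -∫_0^r u^p ψ^{n-1} ds, with p,q > 0, and suppose u is decreasing with limit ℓ_u ≥ 0 and v is decreasing with limit ℓ_v ≥ 0 at infinity. Then ℓ_u = ℓ_v = 0. -/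
/-!
If `u → ℓ > 0`, then `u ≥ ℓ` by monotonicity, and the equation for `v` gives
`-v' ≥ ℓ ^ p Θ` on `(0, ∞)`. As `v` converges and `v' ≤ 0`, `v'` is integrable at infinity,
hence so is `Θ`. Near `0`, `ψ(r) ≈ r` forces `Θ(r) = O(r)`, so `Θ` would be integrable on
`(0, ∞)`. The same argument with `u` and `v` exchanged gives `ℓ_v = 0`.
-/

open Filter MeasureTheory Set Topology

/-- The `Θ` of the paper, with `k = n - 1`: the volume of the model ball of radius `r` divided by
the area of its boundary sphere. -/
noncomputable def volumeAreaRatio (ψ : ℝ → ℝ) (k : ℕ) (r : ℝ) : ℝ :=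
  (∫ s in (0:ℝ)..r, ψ s ^ k) / ψ r ^ k

lemma exists_le_four_mul_of_hasDerivAt_one {ψ : ℝ → ℝ} (hψ0 : ψ 0 = 0)
    (hψ' : HasDerivAt ψ 1 0) : ∃ δ > 0, ∀ r ∈ Ioo 0 δ, ∀ s ∈ Icc 0 r, ψ s ≤ 4 * ψ r := by
  have hslope : ∀ᶠ t in 𝓝[>] 0, t⁻¹ • (ψ (0 + t) - ψ 0) ∈ Ioo (1 / 2 : ℝ) 2 :=
    hψ'.tendsto_slope_zero_right (Ioo_mem_nhds (by norm_num) (by norm_num))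
  obtain ⟨δ, hδ, hδslope⟩ := mem_nhdsGT_iff_exists_Ioo_subset.mp hslope
  have hcomp : ∀ t ∈ Ioo 0 δ, t / 2 < ψ t ∧ ψ t < 2 * t := by
    intro t ht
    have h : 1 / 2 < t⁻¹ * ψ t ∧ t⁻¹ * ψ t < 2 := by simpa [hψ0] using hδslope ht
    rw [← div_eq_inv_mul, lt_div_iff₀ ht.1, div_lt_iff₀ ht.1] at h
    constructor <;> linarith
  refine ⟨δ, hδ, fun r hr s hs => ?_⟩
  obtain ⟨hr_lo, -⟩ := hcomp r hr
  rcases hs.1.eq_or_lt with rfl | hs0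
  · rw [hψ0]; linarith [hr.1]
  · linarith [(hcomp s ⟨hs0, hs.2.trans_lt hr.2⟩).2, hs.2]

lemma AntitoneOn.le_of_tendsto_atTop {f : ℝ → ℝ} {a l x : ℝ} (hf : AntitoneOn f (Ici a))
    (hl : Tendsto f atTop (𝓝 l)) (hx : a ≤ x) : l ≤ f x :=
  le_of_tendsto hl <| (eventually_ge_atTop x).mono fun _ hy => hf hx (hx.trans hy) hy

lemma integrableOn_Ioi_of_le_neg_deriv {f v v' : ℝ → ℝ} {a c l : ℝ} (hc : 0 < c)
    (hf : AEStronglyMeasurable f (volume.restrict (Ioi a))) (hf0 : ∀ x ∈ Ioi a, 0 ≤ f x)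
    (hle : ∀ x ∈ Ioi a, c * f x ≤ -v' x) (hv : ∀ x ∈ Ici a, HasDerivAt v (v' x) x)
    (hlim : Tendsto v atTop (𝓝 l)) : IntegrableOn f (Ioi a) := by
  have hv'_nonpos : ∀ x ∈ Ioi a, v' x ≤ 0 := fun x hx =>
    neg_nonneg.mp ((mul_nonneg hc.le (hf0 x hx)).trans (hle x hx))
  have hv' : IntegrableOn v' (Ioi a) := integrableOn_Ioi_deriv_of_nonpos' hv hv'_nonpos hlim
  refine Integrable.mono' (hv'.neg.const_mul c⁻¹) hf ?_
  refine (ae_restrict_iff' measurableSet_Ioi).mpr (ae_of_all _ fun x hx => ?_)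
  rw [Real.norm_of_nonneg (hf0 x hx), le_inv_mul_iff₀ hc]
  exact hle x hx

lemma continuousOn_primitive_Ici {f : ℝ → ℝ} {a : ℝ} (hf : ContinuousOn f (Ici a)) :
    ContinuousOn (fun x => ∫ t in a..x, f t) (Ici a) := by
  intro x hx
  have hax : a ≤ x + 1 := by linarith [mem_Ici.mp hx]
  have hcont := intervalIntegral.continuousOn_primitive_interval (μ := volume) (a := a) (b := x + 1)
    ((hf.mono (uIcc_of_le hax ▸ Icc_subset_Ici_self)).integrableOn_compact isCompact_uIcc)
  rw [uIcc_of_le hax] at hcont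
  refine (hcont x ⟨hx, by linarith⟩).mono_of_mem_nhdsWithin ?_
  rw [← Ici_inter_Iic]
  exact inter_mem_nhdsWithin _ (Iic_mem_nhds (by linarith))

section volumeAreaRatio

variable {ψ : ℝ → ℝ} {k : ℕ}

lemma continuousOn_volumeAreaRatio (hψpos : ∀ r > 0, 0 < ψ r) (hψcont : ContinuousOn ψ (Ici 0)) :
    ContinuousOn (volumeAreaRatio ψ k) (Ioi 0) := by
  unfold volumeAreaRatio
  exact ((continuousOn_primitive_Ici (hψcont.pow k)).mono Ioi_subset_Ici_self).div
      ((hψcont.pow k).mono Ioi_subset_Ici_self) fun r hr => (pow_pos (hψpos r hr) k).ne'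

lemma volumeAreaRatio_nonneg (hψ : ∀ s ≥ 0, 0 ≤ ψ s) {r : ℝ} (hr : 0 ≤ r) :
    0 ≤ volumeAreaRatio ψ k r :=
  div_nonneg (intervalIntegral.integral_nonneg hr fun s hs => pow_nonneg (hψ s hs.1) k)
    (pow_nonneg (hψ r hr) k)

lemma volumeAreaRatio_le_four_pow_mul (hψ : ∀ s ≥ 0, 0 ≤ ψ s) (hψcont : ContinuousOn ψ (Ici 0))
    {r : ℝ} (hr : 0 ≤ r) (hψr : 0 < ψ r) (h4 : ∀ s ∈ Icc 0 r, ψ s ≤ 4 * ψ r) :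
    volumeAreaRatio ψ k r ≤ 4 ^ k * r := by
  have hint : ∫ s in (0:ℝ)..r, ψ s ^ k ≤ ∫ _ in (0:ℝ)..r, (4 * ψ r) ^ k :=
    intervalIntegral.integral_mono_on hr
      ((hψcont.pow k).mono (uIcc_of_le hr ▸ Icc_subset_Ici_self)).intervalIntegrable
      intervalIntegrable_const fun s hs => pow_le_pow_left₀ (hψ s hs.1) (h4 s hs) k
  rw [intervalIntegral.integral_const, smul_eq_mul, sub_zero, mul_pow] at hint
  rw [volumeAreaRatio, div_le_iff₀ (pow_pos hψr k)]
  linarith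

lemma integrableOn_volumeAreaRatio_Ioc (hψ0 : ψ 0 = 0) (hψ' : HasDerivAt ψ 1 0)
    (hψ : ∀ s ≥ 0, 0 ≤ ψ s) (hψpos : ∀ r > 0, 0 < ψ r) (hψcont : ContinuousOn ψ (Ici 0))
    (b : ℝ) : IntegrableOn (volumeAreaRatio ψ k) (Ioc 0 b) := by
  obtain ⟨δ, hδ, h4⟩ := exists_le_four_mul_of_hasDerivAt_one hψ0 hψ'
  have hcont := continuousOn_volumeAreaRatio (k := k) hψpos hψcont
  have hnear : IntegrableOn (volumeAreaRatio ψ k) (Ioc 0 (δ / 2)) := by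
    refine .of_bound measure_Ioc_lt_top
      ((hcont.mono Ioc_subset_Ioi_self).aestronglyMeasurable measurableSet_Ioc) (4 ^ k * δ)
      (ae_restrict_of_forall_mem measurableSet_Ioc fun r hr => ?_)
    have hrδ : r ∈ Ioo 0 δ := ⟨hr.1, by linarith [hr.2]⟩
    rw [Real.norm_of_nonneg (volumeAreaRatio_nonneg hψ hr.1.le)]
    calc volumeAreaRatio ψ k r ≤ 4 ^ k * r :=
          volumeAreaRatio_le_four_pow_mul hψ hψcont hr.1.le (hψpos r hr.1) (h4 r hrδ)
      _ ≤ 4 ^ k * δ := by gcongr; exact hrδ.2.le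
  have hfar : IntegrableOn (volumeAreaRatio ψ k) (Icc (δ / 2) b) :=
    (hcont.mono fun x hx => (half_pos hδ).trans_le hx.1).integrableOn_Icc
  refine (hnear.union hfar).mono_set fun x hx => ?_
  rcases le_or_gt x (δ / 2) with h | h
  · exact Or.inl ⟨hx.1, h⟩
  · exact Or.inr ⟨h.le, hx.2⟩

lemma mul_volumeAreaRatio_le_neg_of_integral_eq {u : ℝ → ℝ} {ℓ p r w : ℝ}
    (hψ : ∀ s ≥ 0, 0 ≤ ψ s) (hψcont : ContinuousOn ψ (Ici 0)) (hp : 0 ≤ p) (hℓ : 0 ≤ ℓ)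
    (hu : ∀ s ≥ 0, ℓ ≤ u s) (huanti : AntitoneOn u (Ici 0)) (hr : 0 < r) (hψr : 0 < ψ r)
    (heq : ψ r ^ k * w = -∫ s in (0:ℝ)..r, u s ^ p * ψ s ^ k) :
    ℓ ^ p * volumeAreaRatio ψ k r ≤ -w := by
  have hsub : uIcc 0 r ⊆ Ici 0 := uIcc_of_le hr.le ▸ Icc_subset_Ici_self
  have hupow : AntitoneOn (fun s => u s ^ p) (Ici 0) := fun a ha b hb hab =>
    Real.rpow_le_rpow (hℓ.trans (hu b hb)) (huanti ha hb hab) hp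
  have hψk : ContinuousOn (fun s => ψ s ^ k) (uIcc 0 r) := (hψcont.pow k).mono hsub
  have hint : ℓ ^ p * ∫ s in (0:ℝ)..r, ψ s ^ k ≤ ∫ s in (0:ℝ)..r, u s ^ p * ψ s ^ k := by
    rw [← intervalIntegral.integral_const_mul]
    refine intervalIntegral.integral_mono_on hr.le (hψk.intervalIntegrable.const_mul (ℓ ^ p))
      ((hupow.mono hsub).intervalIntegrable.mul_continuousOn hψk) fun s hs => ?_
    exact mul_le_mul_of_nonneg_right (Real.rpow_le_rpow hℓ (hu s hs.1) hp)
      (pow_nonneg (hψ s hs.1) k)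
  rw [volumeAreaRatio, ← mul_div_assoc, div_le_iff₀ (pow_pos hψr k)]
  linarith

end volumeAreaRatio

lemma eq_zero_of_tendsto_of_not_integrableOn_volumeAreaRatio {ψ u v v' : ℝ → ℝ} {k : ℕ}
    {p ℓ ℓ' : ℝ} (hψ0 : ψ 0 = 0) (hψ' : HasDerivAt ψ 1 0) (hψpos : ∀ r > 0, 0 < ψ r)
    (hψcont : ContinuousOn ψ (Ici 0)) (hΘ : ¬ IntegrableOn (volumeAreaRatio ψ k) (Ioi 0))
    (hp : 0 ≤ p) (hvd : ∀ r > 0, HasDerivAt v (v' r) r)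
    (heqv : ∀ r > 0, ψ r ^ k * v' r = -∫ s in (0:ℝ)..r, u s ^ p * ψ s ^ k)
    (huanti : AntitoneOn u (Ici 0)) (hℓ : 0 ≤ ℓ) (hulim : Tendsto u atTop (𝓝 ℓ))
    (hvlim : Tendsto v atTop (𝓝 ℓ')) : ℓ = 0 := by
  by_contra hne
  have hℓpos : 0 < ℓ := hℓ.lt_of_ne' hne
  have hψ : ∀ s ≥ 0, 0 ≤ ψ s := fun s hs =>
    hs.eq_or_lt.elim (fun h => h ▸ hψ0.ge) fun h => (hψpos s h).le
  have hΘv : ∀ r > 0, ℓ ^ p * volumeAreaRatio ψ k r ≤ -v' r := fun r hr =>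
    mul_volumeAreaRatio_le_neg_of_integral_eq hψ hψcont hp hℓ
      (fun s hs => huanti.le_of_tendsto_atTop hulim hs) huanti hr (hψpos r hr) (heqv r hr)
  have hfar : IntegrableOn (volumeAreaRatio ψ k) (Ioi 1) := by
    refine integrableOn_Ioi_of_le_neg_deriv (Real.rpow_pos_of_pos hℓpos p) ?_
      (fun x hx => volumeAreaRatio_nonneg hψ (zero_le_one.trans (le_of_lt hx)))
      (fun x hx => hΘv x (one_pos.trans hx)) (fun x hx => hvd x (one_pos.trans_le hx)) hvlim
    exact ((continuousOn_volumeAreaRatio hψpos hψcont).mono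
        fun x (hx : 1 < x) => one_pos.trans hx).aestronglyMeasurable measurableSet_Ioi
  rw [← Ioc_union_Ioi_eq_Ioi zero_le_one] at hΘ
  exact hΘ ((integrableOn_volumeAreaRatio_Ioc hψ0 hψ' hψ hψpos hψcont 1).union hfar)

theorem limits_zero_of_stochastically_complete_general
    (n : ℕ) (ψ : ℝ → ℝ)
    (hψ0 : ψ 0 = 0) (hψ'0 : HasDerivAt ψ 1 0)
    (hψpos : ∀ r > (0:ℝ), 0 < ψ r)
    (hψcont : ContinuousOn ψ (Ici 0))
    (hΘ : ¬ IntegrableOn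
        (fun r => (∫ s in (0:ℝ)..r, ψ s ^ (n-1)) / ψ r ^ (n-1)) (Ioi (0:ℝ)))
    (p q : ℝ) (hp : 0 < p) (hq : 0 < q)
    (u v u' v' : ℝ → ℝ)
    (hud : ∀ r > (0:ℝ), HasDerivAt u (u' r) r)
    (hvd : ∀ r > (0:ℝ), HasDerivAt v (v' r) r)
    (hequ : ∀ r > (0:ℝ),
      ψ r ^ (n-1) * u' r = - ∫ s in (0:ℝ)..r, v s ^ q * ψ s ^ (n-1))
    (heqv : ∀ r > (0:ℝ),
      ψ r ^ (n-1) * v' r = - ∫ s in (0:ℝ)..r, u s ^ p * ψ s ^ (n-1))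
    (huanti : AntitoneOn u (Ici 0)) (hvanti : AntitoneOn v (Ici 0))
    (ℓu ℓv : ℝ) (hℓu : 0 ≤ ℓu) (hℓv : 0 ≤ ℓv)
    (hulim : Tendsto u atTop (nhds ℓu)) (hvlim : Tendsto v atTop (nhds ℓv)) :
    ℓu = 0 ∧ ℓv = 0 :=
  ⟨eq_zero_of_tendsto_of_not_integrableOn_volumeAreaRatio hψ0 hψ'0 hψpos hψcont hΘ hp.le hvd heqv
      huanti hℓu hulim hvlim,
    eq_zero_of_tendsto_of_not_integrableOn_volumeAreaRatio hψ0 hψ'0 hψpos hψcont hΘ hq.le hud hequ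
      hvanti hℓv hvlim hulim⟩

/-- On a stochastically complete model (`Θ ∉ L¹`), any globally positive decreasing
radial solution of the Lane-Emden system has both limits at infinity equal to zero. -/
theorem limits_zero_of_stochastically_complete
    (n : ℕ) (hn : 3 ≤ n) (ψ : ℝ → ℝ)
    (hψ0 : ψ 0 = 0) (hψ'0 : HasDerivAt ψ 1 0)
    (hψpos : ∀ r > (0:ℝ), 0 < ψ r)
    (hψcont : ContinuousOn ψ (Ici 0))
    (hΘ : ¬ IntegrableOn
        (fun r => (∫ s in (0:ℝ)..r, ψ s ^ (n-1)) / ψ r ^ (n-1)) (Ioi (0:ℝ)))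
    (p q : ℝ) (hp : 0 < p) (hq : 0 < q)
    (u v u' v' : ℝ → ℝ)
    (hu : ∀ r ≥ (0:ℝ), 0 < u r) (hv : ∀ r ≥ (0:ℝ), 0 < v r)
    (hud : ∀ r > (0:ℝ), HasDerivAt u (u' r) r)
    (hvd : ∀ r > (0:ℝ), HasDerivAt v (v' r) r)
    (hequ : ∀ r > (0:ℝ),
      ψ r ^ (n-1) * u' r = - ∫ s in (0:ℝ)..r, v s ^ q * ψ s ^ (n-1))
    (heqv : ∀ r > (0:ℝ),
      ψ r ^ (n-1) * v' r = - ∫ s in (0:ℝ)..r, u s ^ p * ψ s ^ (n-1))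
    (huanti : AntitoneOn u (Ici 0)) (hvanti : AntitoneOn v (Ici 0))
    (ℓu ℓv : ℝ) (hℓu : 0 ≤ ℓu) (hℓv : 0 ≤ ℓv)
    (hulim : Tendsto u atTop (nhds ℓu)) (hvlim : Tendsto v atTop (nhds ℓv)) :
    ℓu = 0 ∧ ℓv = 0 :=
  limits_zero_of_stochastically_complete_general n ψ hψ0 hψ'0 hψpos hψcont hΘ p q hp hq u v u' v'
    hud hvd hequ heqv huanti hvanti ℓu ℓv hℓu hℓv hulim hvlim
end

section
/- Let ψ : [0,∞) → ℝ be C¹, positive and nondecreasing on (0,∞) with ψ(0)=0. Let p,q > 0 and let (u₁,v₁), (u₂,v₂) be two positive solutions on (0,b) of the integral system uᵢ(r) = ξᵢ - ∫_0^r ψ(s)^{1-n} (∫_0^s vᵢ^q ψ^{n-1} dt) ds, vᵢ(r) = ηᵢ - ∫_0^r ψ(s)^{1-n} (∫_0^s uᵢ^p ψ^{n-1} dt) ds, with initial data ξ₁ ≥ ξ₂ > 0 and η₂ > η₁ > 0. Then the functions r ↦ u₁(r) - u₂(r) and r ↦ v₂(r) - v₁(r) are strictly increasing on (0,b); in particular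 u₂ < u₁ and v₁ < v₂ on (0,b). -/
open Filter MeasureTheory Set
open scoped ENNReal

/-!
Put `U = u₁ - u₂` and `V = v₂ - v₁`. Subtracting the equations,
`U = (ξ₁ - ξ₂) + P(v₂^q) - P(v₁^q)` and `V = (η₂ - η₁) + P(u₁^p) - P(u₂^p)`, where `P` is the
radial potential, which is order preserving. As long as `v₁ < v₂`, `U` is strictly increasing,
so `u₂ < u₁`, so `V` is strictly increasing and stays above `η₂ - η₁ > 0`; this rules out a first
point where `V ≤ 0`.

The regularity needed to manipulate the integrals comes from the equations alone: a solution is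
bounded by its initial value, and a primitive `r ↦ ∫₀ʳ f` is measurable for every `f`.
-/

noncomputable def radialFlux (w f : ℝ → ℝ) (s : ℝ) : ℝ :=
  (∫ t in (0:ℝ)..s, f t * w t) / w s

/-- `P = radialPotential w f` solves `(w P')' = f w`, `P 0 = 0`; for `w = ψ ^ (n - 1)` the left
side is `w` times the radial Laplacian of the model manifold. -/
noncomputable def radialPotential (w f : ℝ → ℝ) (r : ℝ) : ℝ :=
  ∫ s in (0:ℝ)..r, radialFlux w f s

def RadiallyIntegrable (w f : ℝ → ℝ) (c : ℝ) : Prop :=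
  IntervalIntegrable (fun t => f t * w t) volume 0 c ∧
    IntervalIntegrable (radialFlux w f) volume 0 c

theorem continuousOn_primitive_setOf_intervalIntegrable (f : ℝ → ℝ) :
    ContinuousOn (fun r => ∫ t in (0:ℝ)..r, f t)
      {r | 0 ≤ r ∧ IntervalIntegrable f volume 0 r} := by
  set S := {r | 0 ≤ r ∧ IntervalIntegrable f volume 0 r}
  have hIcc : ∀ r ∈ S, ContinuousOn (fun r => ∫ t in (0:ℝ)..r, f t) (Icc 0 r) := fun r hr => by
    simpa only [uIcc_of_le hr.1] using
      intervalIntegral.continuousOn_primitive_interval' hr.2 left_mem_uIcc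
  intro r hr
  by_cases h : ∃ r' ∈ S, r < r'
  · obtain ⟨r', hr', hrr'⟩ := h
    refine (hIcc r' hr' r ⟨hr.1, hrr'.le⟩).mono_of_mem_nhdsWithin ?_
    exact mem_of_superset (inter_mem_nhdsWithin S (Iio_mem_nhds hrr'))
      fun x hx => ⟨hx.1.1, hx.2.le⟩
  · push Not at h
    exact (hIcc r hr).mono (fun x hx => ⟨hx.1, h x hx⟩) r hr

theorem aestronglyMeasurable_primitive (f : ℝ → ℝ) :
    AEStronglyMeasurable (fun r => ∫ t in (0:ℝ)..r, f t) (volume.restrict (Ici 0)) := by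
  set S := {r | 0 ≤ r ∧ IntervalIntegrable f volume 0 r}
  have hS : MeasurableSet S := by
    refine OrdConnected.measurableSet ⟨fun x hx y hy z hz =>
      ⟨hx.1.trans hz.1, hy.2.mono_set (uIcc_subset_uIcc_left ?_)⟩⟩
    rw [uIcc_of_le hy.1]
    exact ⟨hx.1.trans hz.1, hz.2⟩
  rw [← inter_union_sdiff (Ici (0:ℝ)) S, aestronglyMeasurable_union_iff]
  constructor
  · exact ((continuousOn_primitive_setOf_intervalIntegrable f).aestronglyMeasurable hS).mono_measure
      (Measure.restrict_mono inter_subset_right le_rfl)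
  · -- off `S` the integral takes the junk value `0`
    refine (aestronglyMeasurable_const (b := 0)).congr
      ((ae_restrict_mem (measurableSet_Ici.diff hS)).mono fun x hx => ?_)
    exact (intervalIntegral.integral_undef fun h => hx.2 ⟨hx.1, h⟩).symm

theorem intervalIntegrable_of_abs_le {g : ℝ → ℝ} {c M : ℝ} (hc : 0 ≤ c)
    (hg : AEStronglyMeasurable g (volume.restrict (Ioc 0 c))) (hM : ∀ t ∈ Ioc 0 c, |g t| ≤ M) :
    IntervalIntegrable g volume 0 c :=
  (intervalIntegrable_iff_integrableOn_Ioc_of_le hc).2 <|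
    IntegrableOn.of_bound measure_Ioc_lt_top hg M ((ae_restrict_mem measurableSet_Ioc).mono hM)

theorem strictMonoOn_primitive {g : ℝ → ℝ} {c : ℝ} (hg : IntervalIntegrable g volume 0 c)
    (hpos : ∀ t ∈ Ioo 0 c, 0 < g t) :
    StrictMonoOn (fun r => ∫ t in (0:ℝ)..r, g t) (Icc 0 c) := by
  have hsub : ∀ {a b}, a ∈ Icc 0 c → b ∈ Icc 0 c → uIcc a b ⊆ uIcc 0 c := fun ha hb =>
    uIcc_subset_uIcc (Icc_subset_uIcc ha) (Icc_subset_uIcc hb)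
  intro r₁ h₁ r₂ h₂ h
  have h0 : (0:ℝ) ∈ Icc 0 c := ⟨le_rfl, h₁.1.trans h₁.2⟩
  rw [← sub_pos, intervalIntegral.integral_interval_sub_left (hg.mono_set (hsub h0 h₂))
    (hg.mono_set (hsub h0 h₁))]
  exact intervalIntegral.intervalIntegral_pos_of_pos_on (hg.mono_set (hsub h₁ h₂))
    (fun t ht => hpos t ⟨h₁.1.trans_lt ht.1, ht.2.trans_le h₂.2⟩) h

section Weighted

variable {w f g : ℝ → ℝ} {c s M : ℝ}

theorem radialFlux_nonneg (hw_pos : ∀ t > 0, 0 < w t) (hs : 0 < s)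
    (hf : ∀ t ∈ Ioc 0 s, 0 ≤ f t) : 0 ≤ radialFlux w f s := by
  refine div_nonneg ?_ (hw_pos s hs).le
  rw [intervalIntegral.integral_of_le hs.le]
  exact setIntegral_nonneg measurableSet_Ioc fun t ht => mul_nonneg (hf t ht) (hw_pos t ht.1).le

theorem radialPotential_nonneg (hw_pos : ∀ t > 0, 0 < w t) (hc : 0 ≤ c)
    (hf : ∀ t ∈ Ioc 0 c, 0 ≤ f t) : 0 ≤ radialPotential w f c := by
  rw [radialPotential, intervalIntegral.integral_of_le hc]
  exact setIntegral_nonneg measurableSet_Ioc fun s hs =>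
    radialFlux_nonneg hw_pos hs.1 fun t ht => hf t ⟨ht.1, ht.2.trans hs.2⟩

theorem radialPotential_zero : radialPotential w f 0 = 0 :=
  intervalIntegral.integral_same

theorem RadiallyIntegrable.of_abs_le (hw_pos : ∀ t > 0, 0 < w t)
    (hw_mono : MonotoneOn w (Ioi 0)) (hc : 0 ≤ c)
    (hf : AEStronglyMeasurable f (volume.restrict (Ioc 0 c))) (hM : ∀ t ∈ Ioc 0 c, |f t| ≤ M) :
    RadiallyIntegrable w f c := by
  have hw_meas : AEMeasurable w (volume.restrict (Ioc 0 c)) :=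
    (aemeasurable_restrict_of_monotoneOn measurableSet_Ioi hw_mono).mono_measure
      (Measure.restrict_mono Ioc_subset_Ioi_self le_rfl)
  have hfw : ∀ s ∈ Ioc 0 c, ∀ t ∈ Ioc 0 s, |f t * w t| ≤ M * w s := fun s hs t ht => by
    rw [abs_mul, abs_of_pos (hw_pos t ht.1)]
    exact mul_le_mul (hM t ⟨ht.1, ht.2.trans hs.2⟩) (hw_mono ht.1 (ht.1.trans_le ht.2) ht.2)
      (hw_pos t ht.1).le ((abs_nonneg _).trans (hM s hs))
  refine ⟨intervalIntegrable_of_abs_le hc (hf.mul hw_meas.aestronglyMeasurable)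
    fun t ht => hfw c ⟨ht.1.trans_le ht.2, le_rfl⟩ t ht,
    intervalIntegrable_of_abs_le (M := M * c) hc ?_ ?_⟩
  · exact (((aestronglyMeasurable_primitive _).mono_measure
      (Measure.restrict_mono (Ioc_subset_Ioi_self.trans Ioi_subset_Ici_self) le_rfl)).aemeasurable.div
        hw_meas).aestronglyMeasurable
  · intro s hs
    have hint := intervalIntegral.norm_integral_le_of_norm_le_const (a := 0) (b := s)
      (f := fun t => f t * w t) (C := M * w s) fun t ht =>
        hfw s hs t (by rwa [uIoc_of_le hs.1.le] at ht)
    rw [radialFlux, abs_div, abs_of_pos (hw_pos s hs.1), div_le_iff₀ (hw_pos s hs.1)]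
    have hM0 : 0 ≤ M := (abs_nonneg _).trans (hM s hs)
    rw [Real.norm_eq_abs, sub_zero, abs_of_pos hs.1] at hint
    linarith [mul_le_mul_of_nonneg_left hs.2 (mul_nonneg hM0 (hw_pos s hs.1).le)]

theorem radialFlux_lt_radialFlux (hw_pos : ∀ t > 0, 0 < w t)
    (hf : IntervalIntegrable (fun t => f t * w t) volume 0 c)
    (hg : IntervalIntegrable (fun t => g t * w t) volume 0 c) (hs : s ∈ Ioc 0 c)
    (hfg : ∀ t ∈ Ioo 0 s, f t < g t) : radialFlux w f s < radialFlux w g s := by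
  have hsub : uIcc 0 s ⊆ uIcc 0 c := uIcc_subset_uIcc_left (Icc_subset_uIcc (Ioc_subset_Icc_self hs))
  refine div_lt_div_of_pos_right ?_ (hw_pos s hs.1)
  rw [← sub_pos, ← intervalIntegral.integral_sub (hg.mono_set hsub) (hf.mono_set hsub)]
  exact intervalIntegral.intervalIntegral_pos_of_pos_on ((hg.sub hf).mono_set hsub)
    (fun t ht => sub_pos.2 (mul_lt_mul_of_pos_right (hfg t ht) (hw_pos t ht.1))) hs.1

theorem strictMonoOn_radialPotential_sub (hw_pos : ∀ t > 0, 0 < w t)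
    (hf : RadiallyIntegrable w f c) (hg : RadiallyIntegrable w g c)
    (hfg : ∀ t ∈ Ioo 0 c, f t < g t) :
    StrictMonoOn (fun r => radialPotential w g r - radialPotential w f r) (Icc 0 c) := by
  refine (strictMonoOn_primitive (hg.2.sub hf.2) fun s hs => sub_pos.2 <|
    radialFlux_lt_radialFlux hw_pos hf.1 hg.1 (Ioo_subset_Ioc_self hs) fun t ht =>
      hfg t ⟨ht.1, ht.2.trans hs.2⟩).congr fun r hr => ?_
  have hsub : uIcc 0 r ⊆ uIcc 0 c := uIcc_subset_uIcc_left (Icc_subset_uIcc hr)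
  exact intervalIntegral.integral_sub (hg.2.mono_set hsub) (hf.2.mono_set hsub)

theorem RadiallyIntegrable.continuousOn_radialPotential (hf : RadiallyIntegrable w f c)
    (hc : 0 ≤ c) : ContinuousOn (radialPotential w f) (Icc 0 c) := by
  have := intervalIntegral.continuousOn_primitive_interval' hf.2 left_mem_uIcc
  rwa [uIcc_of_le hc] at this

theorem radiallyIntegrable_rpow_of_eqOn {y : ℝ → ℝ} {ξ e : ℝ} (hw_pos : ∀ t > 0, 0 < w t)
    (hw_mono : MonotoneOn w (Ioi 0)) (hc : 0 ≤ c) (he : 0 ≤ e)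
    (hy : EqOn y (fun r => ξ - radialPotential w f r) (Icc 0 c))
    (hf : ∀ t ∈ Ioc 0 c, 0 ≤ f t) (hy_pos : ∀ t ∈ Ioc 0 c, 0 < y t) :
    RadiallyIntegrable w (fun t => y t ^ e) c := by
  have hy_meas : AEStronglyMeasurable y (volume.restrict (Ioc 0 c)) :=
    ((aestronglyMeasurable_const.sub (aestronglyMeasurable_primitive _)).mono_measure
      (Measure.restrict_mono (Ioc_subset_Ioi_self.trans Ioi_subset_Ici_self) le_rfl)).congr
      ((ae_restrict_mem measurableSet_Ioc).mono fun t ht => (hy (Ioc_subset_Icc_self ht)).symm)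
  have hy_le : ∀ t ∈ Ioc 0 c, y t ≤ ξ := fun t ht => by
    rw [hy (Ioc_subset_Icc_self ht), sub_le_self_iff]
    exact radialPotential_nonneg hw_pos ht.1.le fun s hs => hf s ⟨hs.1, hs.2.trans ht.2⟩
  refine RadiallyIntegrable.of_abs_le (M := ξ ^ e) hw_pos hw_mono hc
    (hy_meas.aemeasurable.pow_const e).aestronglyMeasurable fun t ht => ?_
  rw [abs_of_pos (Real.rpow_pos_of_pos (hy_pos t ht) e)]
  exact Real.rpow_le_rpow (hy_pos t ht).le (hy_le t ht) he

theorem strictMonoOn_sub_of_eqOn_sub_radialPotential {y₁ y₂ f₁ f₂ : ℝ → ℝ} {ξ₁ ξ₂ : ℝ}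
    (hw_pos : ∀ t > 0, 0 < w t)
    (h₁ : EqOn y₁ (fun r => ξ₁ - radialPotential w f₁ r) (Icc 0 c))
    (h₂ : EqOn y₂ (fun r => ξ₂ - radialPotential w f₂ r) (Icc 0 c))
    (hf₁ : RadiallyIntegrable w f₁ c) (hf₂ : RadiallyIntegrable w f₂ c)
    (hlt : ∀ t ∈ Ioo 0 c, f₁ t < f₂ t) :
    StrictMonoOn (fun r => y₁ r - y₂ r) (Icc 0 c) := by
  intro r₁ hr₁ r₂ hr₂ h
  have := strictMonoOn_radialPotential_sub hw_pos hf₁ hf₂ hlt hr₁ hr₂ h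
  simp only [h₁ hr₁, h₂ hr₁, h₁ hr₂, h₂ hr₂] at this ⊢
  linarith

end Weighted

theorem lt_of_strictMonoOn_sub {y₁ y₂ : ℝ → ℝ} {c t : ℝ}
    (h : StrictMonoOn (fun r => y₁ r - y₂ r) (Icc 0 c)) (h0 : y₂ 0 ≤ y₁ 0) (ht : t ∈ Ioc 0 c) :
    y₂ t < y₁ t := by
  have := h ⟨le_rfl, ht.1.le.trans ht.2⟩ (Ioc_subset_Icc_self ht) ht.1
  dsimp only at this
  linarith

structure IsLaneEmdenSolution (w : ℝ → ℝ) (p q ξ η c : ℝ) (u v : ℝ → ℝ) : Prop where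
  u_pos : ∀ r ∈ Ioc 0 c, 0 < u r
  v_pos : ∀ r ∈ Ioc 0 c, 0 < v r
  u_eq : EqOn u (fun r => ξ - radialPotential w (fun t => v t ^ q) r) (Icc 0 c)
  v_eq : EqOn v (fun r => η - radialPotential w (fun t => u t ^ p) r) (Icc 0 c)

namespace IsLaneEmdenSolution

variable {w u v u₁ v₁ u₂ v₂ : ℝ → ℝ} {p q ξ η ξ₁ ξ₂ η₁ η₂ c R : ℝ}

theorem mono (h : IsLaneEmdenSolution w p q ξ η c u v) (hR : R ≤ c) :
    IsLaneEmdenSolution w p q ξ η R u v where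
  u_pos r hr := h.u_pos r ⟨hr.1, hr.2.trans hR⟩
  v_pos r hr := h.v_pos r ⟨hr.1, hr.2.trans hR⟩
  u_eq := h.u_eq.mono (Icc_subset_Icc_right hR)
  v_eq := h.v_eq.mono (Icc_subset_Icc_right hR)

theorem u_zero (h : IsLaneEmdenSolution w p q ξ η c u v) (hc : 0 ≤ c) : u 0 = ξ := by
  simp [h.u_eq ⟨le_rfl, hc⟩, radialPotential_zero]

theorem v_zero (h : IsLaneEmdenSolution w p q ξ η c u v) (hc : 0 ≤ c) : v 0 = η := by
  simp [h.v_eq ⟨le_rfl, hc⟩, radialPotential_zero]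

theorem radiallyIntegrable_u_rpow (h : IsLaneEmdenSolution w p q ξ η c u v)
    (hw_pos : ∀ t > 0, 0 < w t) (hw_mono : MonotoneOn w (Ioi 0)) (hc : 0 ≤ c) (hp : 0 ≤ p) :
    RadiallyIntegrable w (fun t => u t ^ p) c :=
  radiallyIntegrable_rpow_of_eqOn hw_pos hw_mono hc hp h.u_eq
    (fun t ht => (Real.rpow_pos_of_pos (h.v_pos t ht) q).le) h.u_pos

theorem radiallyIntegrable_v_rpow (h : IsLaneEmdenSolution w p q ξ η c u v)
    (hw_pos : ∀ t > 0, 0 < w t) (hw_mono : MonotoneOn w (Ioi 0)) (hc : 0 ≤ c) (hq : 0 ≤ q) :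
    RadiallyIntegrable w (fun t => v t ^ q) c :=
  radiallyIntegrable_rpow_of_eqOn hw_pos hw_mono hc hq h.v_eq
    (fun t ht => (Real.rpow_pos_of_pos (h.u_pos t ht) p).le) h.v_pos

theorem continuousOn_v (h : IsLaneEmdenSolution w p q ξ η c u v)
    (hw_pos : ∀ t > 0, 0 < w t) (hw_mono : MonotoneOn w (Ioi 0)) (hc : 0 ≤ c) (hp : 0 ≤ p) :
    ContinuousOn v (Icc 0 c) :=
  (continuousOn_const.sub <| RadiallyIntegrable.continuousOn_radialPotential
    (h.radiallyIntegrable_u_rpow hw_pos hw_mono hc hp) hc).congr h.v_eq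

theorem strictMonoOn_sub_of_forall_lt (hw_pos : ∀ t > 0, 0 < w t) (hw_mono : MonotoneOn w (Ioi 0))
    (hp : 0 < p) (hq : 0 < q) (hc : 0 ≤ c)
    (h₁ : IsLaneEmdenSolution w p q ξ₁ η₁ c u₁ v₁) (h₂ : IsLaneEmdenSolution w p q ξ₂ η₂ c u₂ v₂)
    (hξ : ξ₂ ≤ ξ₁) (hv : ∀ t ∈ Ioo 0 c, v₁ t < v₂ t) :
    StrictMonoOn (fun r => u₁ r - u₂ r) (Icc 0 c) ∧
      StrictMonoOn (fun r => v₂ r - v₁ r) (Icc 0 c) := by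
  have hU := strictMonoOn_sub_of_eqOn_sub_radialPotential hw_pos h₁.u_eq h₂.u_eq
    (h₁.radiallyIntegrable_v_rpow hw_pos hw_mono hc hq.le)
    (h₂.radiallyIntegrable_v_rpow hw_pos hw_mono hc hq.le) fun t ht =>
      Real.rpow_lt_rpow (h₁.v_pos t (Ioo_subset_Ioc_self ht)).le (hv t ht) hq
  have hu : ∀ t ∈ Ioc 0 c, u₂ t < u₁ t := fun t ht =>
    lt_of_strictMonoOn_sub hU (by rw [h₁.u_zero hc, h₂.u_zero hc]; exact hξ) ht
  refine ⟨hU, strictMonoOn_sub_of_eqOn_sub_radialPotential hw_pos h₂.v_eq h₁.v_eq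
    (h₂.radiallyIntegrable_u_rpow hw_pos hw_mono hc hp.le)
    (h₁.radiallyIntegrable_u_rpow hw_pos hw_mono hc hp.le) fun t ht => ?_⟩
  exact Real.rpow_lt_rpow (h₂.u_pos t (Ioo_subset_Ioc_self ht)).le
    (hu t (Ioo_subset_Ioc_self ht)) hp

theorem ordering (hw_pos : ∀ t > 0, 0 < w t) (hw_mono : MonotoneOn w (Ioi 0))
    (hp : 0 < p) (hq : 0 < q) (hc : 0 ≤ c)
    (h₁ : IsLaneEmdenSolution w p q ξ₁ η₁ c u₁ v₁) (h₂ : IsLaneEmdenSolution w p q ξ₂ η₂ c u₂ v₂)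
    (hξ : ξ₂ ≤ ξ₁) (hη : η₁ < η₂) :
    StrictMonoOn (fun r => u₁ r - u₂ r) (Icc 0 c) ∧
      StrictMonoOn (fun r => v₂ r - v₁ r) (Icc 0 c) ∧
      ∀ r ∈ Ioc 0 c, u₂ r < u₁ r ∧ v₁ r < v₂ r := by
  suffices hv : ∀ t ∈ Icc 0 c, v₁ t < v₂ t by
    obtain ⟨hU, hV⟩ := strictMonoOn_sub_of_forall_lt hw_pos hw_mono hp hq hc h₁ h₂ hξ
      fun t ht => hv t (Ioo_subset_Icc_self ht)
    exact ⟨hU, hV, fun r hr => ⟨lt_of_strictMonoOn_sub hU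
      (by rw [h₁.u_zero hc, h₂.u_zero hc]; exact hξ) hr, hv r (Ioc_subset_Icc_self hr)⟩⟩
  by_contra! hcross
  set A := Icc 0 c ∩ (fun r => v₂ r - v₁ r) ⁻¹' Iic 0
  have hA : IsCompact A := isCompact_Icc.of_isClosed_subset
    (((h₂.continuousOn_v hw_pos hw_mono hc hp.le).sub
      (h₁.continuousOn_v hw_pos hw_mono hc hp.le)).preimage_isClosed_of_isClosed
        isClosed_Icc isClosed_Iic) inter_subset_left
  obtain ⟨R, ⟨hR, hVR⟩, hR_least⟩ := hA.exists_isLeast <| by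
    obtain ⟨t, ht, hvt⟩ := hcross
    exact ⟨t, ht, sub_nonpos.2 hvt⟩
  have hbefore : ∀ t ∈ Ioo 0 R, v₁ t < v₂ t := fun t ht => by
    by_contra! hvt
    exact ht.2.not_ge (hR_least ⟨⟨ht.1.le, ht.2.le.trans hR.2⟩, sub_nonpos.2 hvt⟩)
  have hV := (strictMonoOn_sub_of_forall_lt hw_pos hw_mono hp hq hR.1 (h₁.mono hR.2) (h₂.mono hR.2)
    hξ hbefore).2.monotoneOn ⟨le_rfl, hR.1⟩ ⟨hR.1, le_rfl⟩ hR.1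
  simp only [h₁.v_zero hc, h₂.v_zero hc] at hV
  exact (hVR.trans_lt (sub_pos.2 hη)).not_ge hV

end IsLaneEmdenSolution

theorem ordering_of_solutions_general
    (n : ℕ) (ψ : ℝ → ℝ)
    (hψpos : ∀ r > (0:ℝ), 0 < ψ r)
    (hψmono : MonotoneOn ψ (Ioi 0))
    (p q : ℝ) (hp : 0 < p) (hq : 0 < q)
    (b : ℝ≥0∞)
    (ξ₁ ξ₂ η₁ η₂ : ℝ) (hξ : ξ₁ ≥ ξ₂) (hη : η₂ > η₁)
    (u₁ v₁ u₂ v₂ : ℝ → ℝ)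
    (hpos : ∀ r : ℝ, 0 ≤ r → ENNReal.ofReal r < b →
      0 < u₁ r ∧ 0 < v₁ r ∧ 0 < u₂ r ∧ 0 < v₂ r)
    (heq₁u : ∀ r : ℝ, 0 ≤ r → ENNReal.ofReal r < b →
      u₁ r = ξ₁ - ∫ s in (0:ℝ)..r, (∫ t in (0:ℝ)..s, v₁ t ^ q * ψ t ^ (n-1)) / ψ s ^ (n-1))
    (heq₁v : ∀ r : ℝ, 0 ≤ r → ENNReal.ofReal r < b →
      v₁ r = η₁ - ∫ s in (0:ℝ)..r, (∫ t in (0:ℝ)..s, u₁ t ^ p * ψ t ^ (n-1)) / ψ s ^ (n-1))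
    (heq₂u : ∀ r : ℝ, 0 ≤ r → ENNReal.ofReal r < b →
      u₂ r = ξ₂ - ∫ s in (0:ℝ)..r, (∫ t in (0:ℝ)..s, v₂ t ^ q * ψ t ^ (n-1)) / ψ s ^ (n-1))
    (heq₂v : ∀ r : ℝ, 0 ≤ r → ENNReal.ofReal r < b →
      v₂ r = η₂ - ∫ s in (0:ℝ)..r, (∫ t in (0:ℝ)..s, u₂ t ^ p * ψ t ^ (n-1)) / ψ s ^ (n-1)) :
    StrictMonoOn (fun r => u₁ r - u₂ r) {r : ℝ | 0 < r ∧ ENNReal.ofReal r < b} ∧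
    StrictMonoOn (fun r => v₂ r - v₁ r) {r : ℝ | 0 < r ∧ ENNReal.ofReal r < b} ∧
    (∀ r : ℝ, 0 < r → ENNReal.ofReal r < b → u₂ r < u₁ r ∧ v₁ r < v₂ r) := by
  have hw_pos : ∀ t > (0:ℝ), 0 < ψ t ^ (n - 1) := fun t ht => pow_pos (hψpos t ht) _
  have hw_mono : MonotoneOn (fun t => ψ t ^ (n - 1)) (Ioi 0) := fun x hx y hy hxy =>
    pow_le_pow_left₀ (hψpos x hx).le (hψmono hx hy hxy) _
  have hord : ∀ c, 0 ≤ c → ENNReal.ofReal c < b →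
      StrictMonoOn (fun r => u₁ r - u₂ r) (Icc 0 c) ∧
        StrictMonoOn (fun r => v₂ r - v₁ r) (Icc 0 c) ∧
        ∀ r ∈ Ioc 0 c, u₂ r < u₁ r ∧ v₁ r < v₂ r := by
    intro c hc hcb
    have hb : ∀ r ∈ Icc 0 c, ENNReal.ofReal r < b := fun r hr =>
      (ENNReal.ofReal_le_ofReal hr.2).trans_lt hcb
    have hpos' : ∀ r ∈ Ioc 0 c, 0 < u₁ r ∧ 0 < v₁ r ∧ 0 < u₂ r ∧ 0 < v₂ r :=
      fun r hr => hpos r hr.1.le (hb r (Ioc_subset_Icc_self hr))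
    exact IsLaneEmdenSolution.ordering hw_pos hw_mono hp hq hc
      ⟨fun r hr => (hpos' r hr).1, fun r hr => (hpos' r hr).2.1,
        fun r hr => heq₁u r hr.1 (hb r hr), fun r hr => heq₁v r hr.1 (hb r hr)⟩
      ⟨fun r hr => (hpos' r hr).2.2.1, fun r hr => (hpos' r hr).2.2.2,
        fun r hr => heq₂u r hr.1 (hb r hr), fun r hr => heq₂v r hr.1 (hb r hr)⟩ hξ hη
  refine ⟨fun r₁ h₁ r₂ h₂ h => (hord r₂ h₂.1.le h₂.2).1 ⟨h₁.1.le, h.le⟩ ⟨h₂.1.le, le_rfl⟩ h,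
    fun r₁ h₁ r₂ h₂ h => (hord r₂ h₂.1.le h₂.2).2.1 ⟨h₁.1.le, h.le⟩ ⟨h₂.1.le, le_rfl⟩ h,
    fun r hr hrb => (hord r hr.le hrb).2.2 r ⟨hr, le_rfl⟩⟩

/-- Ordering lemma: if `(u₁,v₁)`, `(u₂,v₂)` are positive solutions of the integrated radial
Lane-Emden system on `(0,b)` with `ξ₁ ≥ ξ₂ > 0` and `η₂ > η₁ > 0`, then `u₁ - u₂` and
`v₂ - v₁` are strictly increasing on `(0,b)`; in particular `u₂ < u₁` and `v₁ < v₂` there. -/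
theorem ordering_of_solutions
    (n : ℕ) (hn : 3 ≤ n) (ψ : ℝ → ℝ)
    (hψ0 : ψ 0 = 0) (hψpos : ∀ r > (0:ℝ), 0 < ψ r)
    (hψmono : MonotoneOn ψ (Ioi 0))
    (p q : ℝ) (hp : 0 < p) (hq : 0 < q)
    (b : ℝ≥0∞) (hb : 0 < b)
    (ξ₁ ξ₂ η₁ η₂ : ℝ) (hξ : ξ₁ ≥ ξ₂) (hξ₂ : 0 < ξ₂) (hη : η₂ > η₁) (hη₁ : 0 < η₁)
    (u₁ v₁ u₂ v₂ : ℝ → ℝ)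
    (hpos : ∀ r : ℝ, 0 ≤ r → ENNReal.ofReal r < b →
      0 < u₁ r ∧ 0 < v₁ r ∧ 0 < u₂ r ∧ 0 < v₂ r)
    (heq₁u : ∀ r : ℝ, 0 ≤ r → ENNReal.ofReal r < b →
      u₁ r = ξ₁ - ∫ s in (0:ℝ)..r, (∫ t in (0:ℝ)..s, v₁ t ^ q * ψ t ^ (n-1)) / ψ s ^ (n-1))
    (heq₁v : ∀ r : ℝ, 0 ≤ r → ENNReal.ofReal r < b →
      v₁ r = η₁ - ∫ s in (0:ℝ)..r, (∫ t in (0:ℝ)..s, u₁ t ^ p * ψ t ^ (n-1)) / ψ s ^ (n-1))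
    (heq₂u : ∀ r : ℝ, 0 ≤ r → ENNReal.ofReal r < b →
      u₂ r = ξ₂ - ∫ s in (0:ℝ)..r, (∫ t in (0:ℝ)..s, v₂ t ^ q * ψ t ^ (n-1)) / ψ s ^ (n-1))
    (heq₂v : ∀ r : ℝ, 0 ≤ r → ENNReal.ofReal r < b →
      v₂ r = η₂ - ∫ s in (0:ℝ)..r, (∫ t in (0:ℝ)..s, u₂ t ^ p * ψ t ^ (n-1)) / ψ s ^ (n-1)) :
    StrictMonoOn (fun r => u₁ r - u₂ r) {r : ℝ | 0 < r ∧ ENNReal.ofReal r < b} ∧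
    StrictMonoOn (fun r => v₂ r - v₁ r) {r : ℝ | 0 < r ∧ ENNReal.ofReal r < b} ∧
    (∀ r : ℝ, 0 < r → ENNReal.ofReal r < b → u₂ r < u₁ r ∧ v₁ r < v₂ r) :=
  ordering_of_solutions_general n ψ hψpos hψmono p q hp hq b ξ₁ ξ₂ η₁ η₂ hξ hη u₁ v₁ u₂ v₂ hpos
    heq₁u heq₁v heq₂u heq₂v
end

section
/- Let ψ be as above and let (u,v) solve the radial Lane-Emden system on (0,T) with u'(0)=v'(0)=0. Define the Pohozaev function P(r) = (∫_0^r ψ^{n-1} ds)·F(r) + ψ^{n-1}(r)·(u(r)v'(r)/(p+1) + u'(r)v(r)/(q+1)), where F(r) = u'v' + |u|^{p+1}/(p+1) + |v|^{q+1}/(q+1). Then P'(r) = K(r)u'(r)v'(r), where K(r) = (1/(p+1) + 1/(q+1) - (n-2)/n)·ψ^{n-1}(r) - (2(n-1)/n)·(∫_0^r ψ^n ψ''/(ψ')² ds)·(ψ'(r)/ψ(r)). -/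
open Filter MeasureTheory Set
open scoped ENNReal Topology

/-!
Differentiating `P` by the product rule and eliminating `u''`, `v''` through the equations leaves a
multiple of `u'v'` once `∫₀ʳ ψ^{n-1}` is replaced by `ψ(r)ⁿ/(n ψ'(r)) + (1/n) ∫₀ʳ ψⁿψ''/ψ'²`.
That identity is the fundamental theorem of calculus for `ψⁿ/ψ'` on `(0, r]`. The boundary term
at `0` vanishes: `ψⁿ/ψ'` has a limit `L` at `0⁺` because its derivative is integrable, and `L ≠ 0`
would force `ψ' = ψⁿ / (ψⁿ/ψ') → 0`, contradicting `ψ'(0) = 1`.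
-/

theorem hasDerivAt_abs_rpow_add_one {p : ℝ} (hp : 0 < p) (x : ℝ) :
    HasDerivAt (fun y : ℝ => |y| ^ (p + 1)) ((p + 1) * |x| ^ (p - 1) * x) x := by
  have h := hasDerivAt_abs_rpow x (by linarith : 1 < p + 1)
  rwa [show p + 1 - 2 = p - 1 by ring] at h

theorem abs_rpow_add_one {p : ℝ} (hp : p + 1 ≠ 0) (x : ℝ) :
    |x| ^ (p + 1) = |x| ^ (p - 1) * x * x := by
  have h : p - 1 + (2 : ℕ) = p + 1 := by push_cast; ring
  rw [← h, Real.rpow_add_natCast' (abs_nonneg x) (h ▸ hp), sq_abs]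
  ring

theorem continuousOn_Icc_of_hasDerivAt {E : Type*} [NormedAddCommGroup E] [NormedSpace ℝ E]
    {f f' : ℝ → E} {a b : ℝ} {d : E} (hd : HasDerivAt f d a)
    (hf : ∀ x ∈ Ioc a b, HasDerivAt f (f' x) x) : ContinuousOn f (Icc a b) := by
  intro x hx
  rcases hx.1.eq_or_lt with rfl | hax
  · exact hd.continuousAt.continuousWithinAt
  · exact (hf x ⟨hax, hx.2⟩).continuousAt.continuousWithinAt

theorem eq_of_hasDerivAt_of_tendsto_nhdsGT {E : Type*} [NormedAddCommGroup E] [NormedSpace ℝ E]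
    {f f' : ℝ → E} {a : ℝ} {d e : E} (hd : HasDerivAt f d a)
    (hf : ∀ᶠ x in 𝓝[>] a, HasDerivAt f (f' x) x) (he : Tendsto f' (𝓝[>] a) (𝓝 e)) : d = e := by
  have hIci : HasDerivWithinAt f e (Ici a) a :=
    hasDerivWithinAt_Ici_of_tendsto_deriv (fun x hx => hx.differentiableAt.differentiableWithinAt)
      hd.continuousAt.continuousWithinAt hf (he.congr' (hf.mono fun x hx => hx.deriv.symm))
  exact (uniqueDiffWithinAt_Ici a).eq_deriv _ hd.hasDerivWithinAt hIci

theorem eq_zero_of_tendsto_pow_div_deriv {f f' : ℝ → ℝ} {a d L : ℝ} {n : ℕ} (hn : n ≠ 0)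
    (ha : f a = 0) (hd : HasDerivAt f d a) (hd0 : d ≠ 0)
    (hf : ∀ᶠ x in 𝓝[>] a, HasDerivAt f (f' x) x)
    (hL : Tendsto (fun x => f x ^ n / f' x) (𝓝[>] a) (𝓝 L)) : L = 0 := by
  by_contra hL0
  have hpow : Tendsto (fun x => f x ^ n) (𝓝[>] a) (𝓝 0) := by
    have := (hd.continuousAt.tendsto.pow n).mono_left (nhdsWithin_le_nhds (s := Ioi a))
    rwa [ha, zero_pow hn] at this
  have hf' : Tendsto f' (𝓝[>] a) (𝓝 0) := by
    refine ((hpow.div hL hL0).congr' ?_).trans (by rw [zero_div])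
    filter_upwards [hL.eventually_ne hL0] with x hx
    exact div_div_cancel₀ (div_ne_zero_iff.1 hx).1
  exact hd0 (eq_of_hasDerivAt_of_tendsto_nhdsGT hd hf hf')

theorem tendsto_nhdsGT_of_hasDerivAt_Ioc {g g' : ℝ → ℝ} {a b : ℝ} (hab : a < b)
    (hg : ∀ x ∈ Ioc a b, HasDerivAt g (g' x) x) (hint : IntervalIntegrable g' volume a b) :
    Tendsto g (𝓝[>] a) (𝓝 (g b - ∫ x in a..b, g' x)) := by
  have hprim : Tendsto (fun x => ∫ t in x..b, g' t) (𝓝[>] a) (𝓝 (∫ t in a..b, g' t)) := by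
    have hc := intervalIntegral.continuousOn_primitive_interval_left
      ((intervalIntegrable_iff' (μ := volume)).1 hint) a left_mem_uIcc
    rw [uIcc_of_le hab.le] at hc
    exact hc.tendsto.mono_left
      (nhdsWithin_Ioc_eq_nhdsGT hab ▸ nhdsWithin_mono _ Ioc_subset_Icc_self)
  refine ((tendsto_const_nhds (x := g b)).sub hprim).congr' ?_
  filter_upwards [Ioc_mem_nhdsGT hab] with x hx
  have hsub : uIcc x b ⊆ Ioc a b := by
    rw [uIcc_of_le hx.2]; exact Icc_subset_Ioc_iff hx.2 |>.2 ⟨hx.1, le_rfl⟩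
  rw [intervalIntegral.integral_eq_sub_of_hasDerivAt (fun y hy => hg y (hsub hy))
    (hint.mono_set (hsub.trans (uIcc_of_le hab.le ▸ Ioc_subset_Icc_self))), sub_sub_cancel]

theorem integral_pow_sub_eq_pow_div {ψ ψ' ψ'' : ℝ → ℝ} {a b d : ℝ} {n : ℕ} (hn : n ≠ 0)
    (hab : a < b) (ha : ψ a = 0) (hd : HasDerivAt ψ d a) (hd0 : d ≠ 0)
    (hψ : ∀ x ∈ Ioc a b, HasDerivAt ψ (ψ' x) x) (hψ' : ∀ x ∈ Ioc a b, HasDerivAt ψ' (ψ'' x) x)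
    (hψ'_ne : ∀ x ∈ Ioc a b, ψ' x ≠ 0)
    (hint : IntervalIntegrable (fun x => ψ x ^ n * ψ'' x / ψ' x ^ 2) volume a b) :
    ∫ x in a..b, (n * ψ x ^ (n - 1) - ψ x ^ n * ψ'' x / ψ' x ^ 2) = ψ b ^ n / ψ' b := by
  have hg : ∀ x ∈ Ioc a b, HasDerivAt (fun x => ψ x ^ n / ψ' x)
      (n * ψ x ^ (n - 1) - ψ x ^ n * ψ'' x / ψ' x ^ 2) x := fun x hx =>
    (((hψ x hx).pow n).div (hψ' x hx) (hψ'_ne x hx)).congr_deriv <| by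
      rw [Pi.pow_apply]; field_simp [hψ'_ne x hx]
  have hint' : IntervalIntegrable
      (fun x => n * ψ x ^ (n - 1) - ψ x ^ n * ψ'' x / ψ' x ^ 2) volume a b :=
    ((((continuousOn_Icc_of_hasDerivAt hd hψ).pow _).intervalIntegrable_of_Icc hab.le).const_mul
      _).sub hint
  have hlim := tendsto_nhdsGT_of_hasDerivAt_Ioc hab hg hint'
  have := eq_zero_of_tendsto_pow_div_deriv hn ha hd hd0
    (by filter_upwards [Ioc_mem_nhdsGT hab] using hψ) hlim
  linarith

theorem integral_pow_pred_eq {ψ ψ' ψ'' : ℝ → ℝ} {a b d : ℝ} {n : ℕ} (hn : n ≠ 0)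
    (hab : a < b) (ha : ψ a = 0) (hd : HasDerivAt ψ d a) (hd0 : d ≠ 0)
    (hψ : ∀ x ∈ Ioc a b, HasDerivAt ψ (ψ' x) x) (hψ' : ∀ x ∈ Ioc a b, HasDerivAt ψ' (ψ'' x) x)
    (hψ'_ne : ∀ x ∈ Ioc a b, ψ' x ≠ 0)
    (hint : IntervalIntegrable (fun x => ψ x ^ n * ψ'' x / ψ' x ^ 2) volume a b) :
    ∫ x in a..b, ψ x ^ (n - 1) =
      (ψ b ^ n / ψ' b + ∫ x in a..b, ψ x ^ n * ψ'' x / ψ' x ^ 2) / n := by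
  have hint₁ : IntervalIntegrable (fun x => ψ x ^ (n - 1)) volume a b :=
    ((continuousOn_Icc_of_hasDerivAt hd hψ).pow _).intervalIntegrable_of_Icc hab.le
  have h := integral_pow_sub_eq_pow_div hn hab ha hd hd0 hψ hψ' hψ'_ne hint
  rw [intervalIntegral.integral_sub (hint₁.const_mul _) hint,
    intervalIntegral.integral_const_mul] at h
  rw [eq_div_iff (Nat.cast_ne_zero.2 hn)]
  linarith

theorem pohozaev_derivative_general
    (n : ℕ) (hn : 3 ≤ n) (ψ ψ' ψ'' : ℝ → ℝ)
    (hψ0 : ψ 0 = 0) (hψ'0 : HasDerivAt ψ 1 0)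
    (T : ℝ≥0∞)
    (hψpos : ∀ r > (0:ℝ), 0 < ψ r) (hψ'pos : ∀ r > (0:ℝ), 0 < ψ' r)
    (hψd : ∀ r > (0:ℝ), HasDerivAt ψ (ψ' r) r)
    (hψd' : ∀ r > (0:ℝ), HasDerivAt ψ' (ψ'' r) r)
    (hint : ∀ r > (0:ℝ), IntervalIntegrable
      (fun s => ψ s ^ n * ψ'' s / (ψ' s) ^ 2) volume 0 r)
    (p q : ℝ) (hp : 0 < p) (hq : 0 < q)
    (u v u' v' u'' v'' : ℝ → ℝ)
    (hud : ∀ r : ℝ, 0 < r → ENNReal.ofReal r < T → HasDerivAt u (u' r) r)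
    (hvd : ∀ r : ℝ, 0 < r → ENNReal.ofReal r < T → HasDerivAt v (v' r) r)
    (hud' : ∀ r : ℝ, 0 < r → ENNReal.ofReal r < T → HasDerivAt u' (u'' r) r)
    (hvd' : ∀ r : ℝ, 0 < r → ENNReal.ofReal r < T → HasDerivAt v' (v'' r) r)
    (hequ : ∀ r : ℝ, 0 < r → ENNReal.ofReal r < T →
      u'' r + (n - 1) * (ψ' r / ψ r) * u' r + |v r| ^ (q - 1) * v r = 0)
    (heqv : ∀ r : ℝ, 0 < r → ENNReal.ofReal r < T →
      v'' r + (n - 1) * (ψ' r / ψ r) * v' r + |u r| ^ (p - 1) * u r = 0) :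
    ∀ r : ℝ, 0 < r → ENNReal.ofReal r < T →
      HasDerivAt
        (fun s => (∫ t in (0:ℝ)..s, ψ t ^ (n-1)) *
            (u' s * v' s + |u s| ^ (p + 1) / (p + 1) + |v s| ^ (q + 1) / (q + 1)) +
          ψ s ^ (n-1) * (u s * v' s / (p + 1) + u' s * v s / (q + 1)))
        (((1 / (p + 1) + 1 / (q + 1) - (n - 2) / n) * ψ r ^ (n-1) -
            (2 * (n - 1) / n) * (∫ s in (0:ℝ)..r, ψ s ^ n * ψ'' s / (ψ' s) ^ 2) *
              (ψ' r / ψ r)) * u' r * v' r) r := by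
  intro r hr hrT
  have hψr : ψ r ≠ 0 := (hψpos r hr).ne'
  have hψ'r : ψ' r ≠ 0 := (hψ'pos r hr).ne'
  have hA : HasDerivAt (fun s => ∫ t in (0:ℝ)..s, ψ t ^ (n - 1)) (ψ r ^ (n - 1)) r :=
    intervalIntegral.integral_hasDerivAt_right
      (((continuousOn_Icc_of_hasDerivAt hψ'0 fun x hx => hψd x hx.1).pow _)
        |>.intervalIntegrable_of_Icc hr.le)
      (ContinuousAt.stronglyMeasurableAtFilter isOpen_Ioi
        (fun x hx => (hψd x hx).continuousAt.pow _) r hr)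
      ((hψd r hr).continuousAt.pow _)
  have hF := (((hud' r hr hrT).mul (hvd' r hr hrT)).add
    (((hasDerivAt_abs_rpow_add_one hp (u r)).comp r (hud r hr hrT)).div_const (p + 1))).add
    (((hasDerivAt_abs_rpow_add_one hq (v r)).comp r (hvd r hr hrT)).div_const (q + 1))
  have hG := (((hud r hr hrT).mul (hvd' r hr hrT)).div_const (p + 1)).add
    (((hud' r hr hrT).mul (hvd r hr hrT)).div_const (q + 1))
  refine ((hA.mul hF).add (((hψd r hr).pow (n - 1)).mul hG)).congr_deriv ?_
  have hI := integral_pow_pred_eq (by omega) hr hψ0 hψ'0 one_ne_zero (fun x hx => hψd x hx.1)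
    (fun x hx => hψd' x hx.1) (fun x hx => (hψ'pos x hx.1).ne') (hint r hr)
  simp only [Pi.add_apply, Pi.mul_apply, Pi.pow_apply, Function.comp_apply]
  rw [hI, eq_sub_of_add_eq (eq_sub_of_add_eq (hequ r hr hrT)),
    eq_sub_of_add_eq (eq_sub_of_add_eq (heqv r hr hrT)),
    abs_rpow_add_one (by linarith) (u r), abs_rpow_add_one (by linarith) (v r),
    show ψ r ^ n = ψ r ^ (n - 1 - 1) * ψ r * ψ r by rw [← pow_succ, ← pow_succ]; congr 1; omega,
    show ψ r ^ (n - 1) = ψ r ^ (n - 1 - 1) * ψ r by rw [← pow_succ]; congr 1; omega,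
    Nat.cast_sub (by omega : 1 ≤ n)]
  field_simp
  ring

/-- Pohozaev identity: `P'(r) = K(r) u'(r) v'(r)` along solutions of the radial
Lane-Emden system. -/
theorem pohozaev_derivative
    (n : ℕ) (hn : 3 ≤ n) (ψ ψ' ψ'' : ℝ → ℝ)
    (hψ0 : ψ 0 = 0) (hψ'0 : HasDerivAt ψ 1 0)
    (hψcont : ContinuousOn ψ (Ici 0))
    (T : ℝ≥0∞) (hT : 0 < T)
    (hψpos : ∀ r > (0:ℝ), 0 < ψ r) (hψ'pos : ∀ r > (0:ℝ), 0 < ψ' r)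
    (hψd : ∀ r > (0:ℝ), HasDerivAt ψ (ψ' r) r)
    (hψd' : ∀ r > (0:ℝ), HasDerivAt ψ' (ψ'' r) r)
    (hint : ∀ r > (0:ℝ), IntervalIntegrable
      (fun s => ψ s ^ n * ψ'' s / (ψ' s) ^ 2) volume 0 r)
    (p q : ℝ) (hp : 0 < p) (hq : 0 < q)
    (u v u' v' u'' v'' : ℝ → ℝ)
    (hu'0 : u' 0 = 0) (hv'0 : v' 0 = 0)
    (hud : ∀ r : ℝ, 0 < r → ENNReal.ofReal r < T → HasDerivAt u (u' r) r)
    (hvd : ∀ r : ℝ, 0 < r → ENNReal.ofReal r < T → HasDerivAt v (v' r) r)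
    (hud' : ∀ r : ℝ, 0 < r → ENNReal.ofReal r < T → HasDerivAt u' (u'' r) r)
    (hvd' : ∀ r : ℝ, 0 < r → ENNReal.ofReal r < T → HasDerivAt v' (v'' r) r)
    (hequ : ∀ r : ℝ, 0 < r → ENNReal.ofReal r < T →
      u'' r + (n - 1) * (ψ' r / ψ r) * u' r + |v r| ^ (q - 1) * v r = 0)
    (heqv : ∀ r : ℝ, 0 < r → ENNReal.ofReal r < T →
      v'' r + (n - 1) * (ψ' r / ψ r) * v' r + |u r| ^ (p - 1) * u r = 0) :
    ∀ r : ℝ, 0 < r → ENNReal.ofReal r < T →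
      HasDerivAt
        (fun s => (∫ t in (0:ℝ)..s, ψ t ^ (n-1)) *
            (u' s * v' s + |u s| ^ (p + 1) / (p + 1) + |v s| ^ (q + 1) / (q + 1)) +
          ψ s ^ (n-1) * (u s * v' s / (p + 1) + u' s * v s / (q + 1)))
        (((1 / (p + 1) + 1 / (q + 1) - (n - 2) / n) * ψ r ^ (n-1) -
            (2 * (n - 1) / n) * (∫ s in (0:ℝ)..r, ψ s ^ n * ψ'' s / (ψ' s) ^ 2) *
              (ψ' r / ψ r)) * u' r * v' r) r :=
  pohozaev_derivative_general n hn ψ ψ' ψ'' hψ0 hψ'0 T hψpos hψ'pos hψd hψd' hint p q hp hq u v u'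
    v' u'' v'' hud hvd hud' hvd' hequ heqv
end

section
/- Let ψ be a Cartan-Hadamard warping function (ψ(0)=0, ψ'(0)=1, ψ'' ≥ 0, ψ > 0 on (0,∞)) and let p,q > 0 satisfy 1/(p+1) + 1/(q+1) ≤ (n-2)/n with n ≥ 3. Then there is no positive solution (u,v) on (0,R) of the radial Lane-Emden system with u'(0)=v'(0)=0, u(0),v(0) > 0, u(R)=v(R)=0 for some R > 0. (Dirichlet nonexistence on balls: if such a solution existed, monotonicity would force u'(R) < 0, v'(R) < 0, and evaluating the Pohozaev function at R yields 0 ≥ P(R) = (∫_0^R ψ^{n-1}) u'(R) v'(R) > 0, a contradiction.) -/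
/-!
Both fluxes `ψ^(n-1) u'` and `ψ^(n-1) v'` vanish at `0` (since `ψ 0 = 0`) and decrease, so
`u', v' < 0` on `(0, R]`. Convexity of `ψ` gives `ψ r ^ n ≤ n ψ' r ∫₀ʳ ψ^(n-1)`, which together with
`1/(p+1) + 1/(q+1) ≤ (n-2)/n` makes the Pohozaev function `P` nonincreasing. But `P 0 = 0`, while
the boundary conditions give `P R = (∫₀ᴿ ψ^(n-1)) u'(R) v'(R) > 0`.
-/

open Filter MeasureTheory Set
open scoped Topology

theorem HasDerivAt.of_mul_left {w f : ℝ → ℝ} {w' F' r : ℝ}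
    (hwf : HasDerivAt (fun s => w s * f s) F' r) (hw : HasDerivAt w w' r) (hr : w r ≠ 0) :
    HasDerivAt f ((F' - w' * f r) / w r) r := by
  have hev : (fun s => w s * f s / w s) =ᶠ[𝓝 r] f := by
    filter_upwards [hw.continuousAt.eventually_ne hr] with s hs
    exact mul_div_cancel_left₀ _ hs
  refine ((hwf.div hw hr).congr_of_eventuallyEq hev.symm).congr_deriv ?_
  field_simp

theorem lt_zero_of_hasDerivAt_mul_eq_neg {w f g : ℝ → ℝ} {R : ℝ} (hw0 : w 0 = 0)
    (hw : ∀ r ∈ Ioc 0 R, 0 < w r) (hwc : ContinuousOn w (Icc 0 R))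
    (hfc : ContinuousOn f (Icc 0 R)) (hg : ∀ r ∈ Ioo 0 R, 0 < g r)
    (hd : ∀ r ∈ Ioo 0 R, HasDerivAt (fun s => w s * f s) (-(w r * g r)) r)
    {r : ℝ} (hr : r ∈ Ioc 0 R) : f r < 0 := by
  have hanti : StrictAntiOn (fun s => w s * f s) (Icc 0 R) := by
    refine strictAntiOn_of_hasDerivWithinAt_neg (f' := fun x => -(w x * g x)) (convex_Icc 0 R)
      (hwc.mul hfc) (fun x hx => ?_) (fun x hx => ?_)
    · rw [interior_Icc] at hx ⊢
      exact (hd x hx).hasDerivWithinAt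
    · rw [interior_Icc] at hx
      exact neg_neg_of_pos (mul_pos (hw x (Ioo_subset_Ioc_self hx)) (hg x hx))
  have hneg : w r * f r < 0 := by
    simpa [hw0] using hanti (left_mem_Icc.2 (hr.1.trans_le hr.2).le) (Ioc_subset_Icc_self hr) hr.1
  exact neg_of_mul_neg_right hneg (hw r hr).le

/-- The volume of the geodesic ball of radius `r` in the model with warping function `ψ`, up to
the area of the unit sphere, when `m = n - 1`. -/
noncomputable def modelVolume (m : ℕ) (ψ : ℝ → ℝ) (r : ℝ) : ℝ :=
  ∫ t in 0..r, ψ t ^ m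

section modelVolume

variable {m : ℕ} {ψ : ℝ → ℝ}

@[simp]
theorem modelVolume_zero : modelVolume m ψ 0 = 0 :=
  intervalIntegral.integral_same

theorem continuousOn_modelVolume (hψ : ContinuousOn ψ (Ici 0)) (R : ℝ) :
    ContinuousOn (modelVolume m ψ) (Icc 0 R) := by
  rcases lt_or_ge R 0 with hR | hR
  · simp [Icc_eq_empty_of_lt hR]
  · have h := intervalIntegral.continuousOn_primitive_interval' (a := 0) (μ := volume)
      (((hψ.mono Icc_subset_Ici_self).pow m).intervalIntegrable_of_Icc hR) left_mem_uIcc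
    rw [uIcc_of_le hR] at h
    exact h

theorem hasDerivAt_modelVolume (hψ : ContinuousOn ψ (Ici 0)) {r : ℝ} (hr : 0 < r) :
    HasDerivAt (modelVolume m ψ) (ψ r ^ m) r :=
  intervalIntegral.integral_hasDerivAt_right
    (((hψ.mono Icc_subset_Ici_self).pow m).intervalIntegrable_of_Icc hr.le)
    ((hψ.mono Ioi_subset_Ici_self).pow m |>.stronglyMeasurableAtFilter isOpen_Ioi r hr)
    ((hψ.continuousAt (Ici_mem_nhds hr)).pow m)

theorem modelVolume_pos (hψ : ContinuousOn ψ (Ici 0)) (hpos : ∀ r > 0, 0 < ψ r) {r : ℝ}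
    (hr : 0 < r) : 0 < modelVolume m ψ r :=
  intervalIntegral.intervalIntegral_pos_of_pos_on
    (((hψ.mono Icc_subset_Ici_self).pow m).intervalIntegrable_of_Icc hr.le)
    (fun t ht => pow_pos (hpos t ht.1) m) hr

end modelVolume

structure IsWarping (ψ ψ' : ℝ → ℝ) : Prop where
  zero : ψ 0 = 0
  pos : ∀ r > 0, 0 < ψ r
  hasDerivAt : ∀ r > 0, HasDerivAt ψ (ψ' r) r
  continuousOn : ContinuousOn ψ (Ici 0)

namespace IsWarping

variable {ψ ψ' : ℝ → ℝ}

theorem pow_succ_le_mul_modelVolume_mul (hψ : IsWarping ψ ψ') (hψ' : MonotoneOn ψ' (Ioi 0))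
    (m : ℕ) {r : ℝ} (hr : 0 < r) :
    ψ r ^ (m + 1) ≤ (m + 1) * modelVolume m ψ r * ψ' r := by
  set H : ℝ → ℝ := fun s => (m + 1) * ψ' r * modelVolume m ψ s - ψ s ^ (m + 1)
  have hHd : ∀ s ∈ Ioo 0 r, HasDerivAt H ((m + 1) * (ψ' r - ψ' s) * ψ s ^ m) s := by
    intro s hs
    refine ((hasDerivAt_modelVolume hψ.continuousOn hs.1).const_mul _ |>.sub
      ((hψ.hasDerivAt s hs.1).pow (m + 1))).congr_deriv ?_
    push_cast
    ring
  have hmono : MonotoneOn H (Icc 0 r) := by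
    refine monotoneOn_of_hasDerivWithinAt_nonneg (convex_Icc 0 r)
      (f' := fun s => (m + 1) * (ψ' r - ψ' s) * ψ s ^ m)
      ((continuousOn_const.mul (continuousOn_modelVolume hψ.continuousOn r)).sub
        ((hψ.continuousOn.mono Icc_subset_Ici_self).pow _)) (fun s hs => ?_) (fun s hs => ?_)
    · rw [interior_Icc] at hs ⊢
      exact (hHd s hs).hasDerivWithinAt
    · rw [interior_Icc] at hs
      exact mul_nonneg (mul_nonneg (by positivity) (sub_nonneg.2 (hψ' hs.1 hr hs.2.le)))
        (pow_nonneg (hψ.pos s hs.1).le m)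
  have := hmono (left_mem_Icc.2 hr.le) (right_mem_Icc.2 hr.le) hr.le
  simp only [H, modelVolume_zero, hψ.zero, mul_zero, zero_pow (Nat.succ_ne_zero m),
    sub_zero] at this
  linarith

end IsWarping

/-- The radial Lane-Emden system in flux form, with `m = n - 1`. -/
structure IsLaneEmdenSolution_s7 (m : ℕ) (ψ : ℝ → ℝ) (p q R : ℝ) (u v u' v' : ℝ → ℝ) : Prop where
  continuousOn_u : ContinuousOn u (Icc 0 R)
  continuousOn_v : ContinuousOn v (Icc 0 R)
  continuousOn_u' : ContinuousOn u' (Icc 0 R)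
  continuousOn_v' : ContinuousOn v' (Icc 0 R)
  u_pos : ∀ r ∈ Ioo 0 R, 0 < u r
  v_pos : ∀ r ∈ Ioo 0 R, 0 < v r
  hasDerivAt_u : ∀ r ∈ Ioo 0 R, HasDerivAt u (u' r) r
  hasDerivAt_v : ∀ r ∈ Ioo 0 R, HasDerivAt v (v' r) r
  flux_u : ∀ r ∈ Ioo 0 R, HasDerivAt (fun s => ψ s ^ m * u' s) (-(ψ r ^ m * v r ^ q)) r
  flux_v : ∀ r ∈ Ioo 0 R, HasDerivAt (fun s => ψ s ^ m * v' s) (-(ψ r ^ m * u r ^ p)) r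

noncomputable def pohozaev (m : ℕ) (ψ : ℝ → ℝ) (p q : ℝ) (u v u' v' : ℝ → ℝ) (r : ℝ) : ℝ :=
  modelVolume m ψ r * (u' r * v' r + u r ^ (p + 1) / (p + 1) + v r ^ (q + 1) / (q + 1))
    + ψ r ^ m * (u r * v' r / (p + 1) + u' r * v r / (q + 1))

theorem pohozaev_zero {m : ℕ} {ψ : ℝ → ℝ} (hψ : ψ 0 = 0) (hm : m ≠ 0) (p q : ℝ)
    (u v u' v' : ℝ → ℝ) : pohozaev m ψ p q u v u' v' 0 = 0 := by
  simp [pohozaev, hψ, hm]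

theorem pohozaev_of_eq_zero {m : ℕ} {ψ : ℝ → ℝ} {p q : ℝ} (hp : p + 1 ≠ 0) (hq : q + 1 ≠ 0)
    {u v u' v' : ℝ → ℝ} {r : ℝ} (hu : u r = 0) (hv : v r = 0) :
    pohozaev m ψ p q u v u' v' r = modelVolume m ψ r * (u' r * v' r) := by
  simp [pohozaev, hu, hv, Real.zero_rpow hp, Real.zero_rpow hq]

namespace IsLaneEmdenSolution_s7

variable {m : ℕ} {ψ ψ' : ℝ → ℝ} {p q R : ℝ} {u v u' v' : ℝ → ℝ}

theorem symm (h : IsLaneEmdenSolution_s7 m ψ p q R u v u' v') :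
    IsLaneEmdenSolution_s7 m ψ q p R v u v' u' :=
  ⟨h.continuousOn_v, h.continuousOn_u, h.continuousOn_v', h.continuousOn_u', h.v_pos, h.u_pos,
    h.hasDerivAt_v, h.hasDerivAt_u, h.flux_v, h.flux_u⟩

-- The flux `ψ^m u'` vanishes at `0` and strictly decreases.
theorem u'_neg (h : IsLaneEmdenSolution_s7 m ψ p q R u v u' v') (hψ : IsWarping ψ ψ')
    (hm : m ≠ 0) {r : ℝ} (hr : r ∈ Ioc 0 R) : u' r < 0 :=
  lt_zero_of_hasDerivAt_mul_eq_neg (by simp [hψ.zero, hm])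
    (fun s hs => pow_pos (hψ.pos s hs.1) m) ((hψ.continuousOn.mono Icc_subset_Ici_self).pow m)
    h.continuousOn_u'
    (fun s hs => Real.rpow_pos_of_pos (h.v_pos s hs) q) h.flux_u hr

theorem hasDerivAt_u' (h : IsLaneEmdenSolution_s7 m ψ p q R u v u' v') (hψ : IsWarping ψ ψ')
    {r : ℝ} (hr : r ∈ Ioo 0 R) :
    HasDerivAt u' (-(v r ^ q) - m * ψ' r / ψ r * u' r) r := by
  have hψr := (hψ.pos r hr.1).ne'
  refine ((h.flux_u r hr).of_mul_left ((hψ.hasDerivAt r hr.1).pow m)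
    (pow_ne_zero m hψr)).congr_deriv ?_
  rcases m with _ | k
  · simp
  · simp only [Nat.add_sub_cancel]
    field_simp
    ring

theorem hasDerivAt_pohozaev (h : IsLaneEmdenSolution_s7 m ψ p q R u v u' v') (hψ : IsWarping ψ ψ')
    (hp : p + 1 ≠ 0) (hq : q + 1 ≠ 0) {r : ℝ} (hr : r ∈ Ioo 0 R) :
    HasDerivAt (pohozaev m ψ p q u v u' v')
      (u' r * v' r * ((1 + 1 / (p + 1) + 1 / (q + 1)) * ψ r ^ m
        - 2 * m * modelVolume m ψ r * ψ' r / ψ r)) r := by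
  have hψr := (hψ.pos r hr.1).ne'
  have hur := (h.u_pos r hr).ne'
  have hvr := (h.v_pos r hr).ne'
  have hU := ((h.hasDerivAt_u r hr).rpow_const (p := p + 1) (Or.inl hur)).div_const (p + 1)
  have hV := ((h.hasDerivAt_v r hr).rpow_const (p := q + 1) (Or.inl hvr)).div_const (q + 1)
  have hE := (((h.hasDerivAt_u' hψ hr).mul (h.symm.hasDerivAt_u' hψ hr)).add hU).add hV
  have hP := (((hasDerivAt_modelVolume (m := m) hψ.continuousOn hr.1).mul hE).add
    (((h.hasDerivAt_u r hr).mul (h.flux_v r hr)).div_const (p + 1))).add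
    (((h.flux_u r hr).mul (h.hasDerivAt_v r hr)).div_const (q + 1))
  refine (hP.congr_deriv ?_).congr_of_eventuallyEq (Eventually.of_forall fun s => ?_)
  · simp only [Pi.add_apply, Pi.mul_apply, add_sub_cancel_right, Real.rpow_add_one hur,
      Real.rpow_add_one hvr]
    field_simp
    ring
  · simp only [pohozaev, Pi.add_apply, Pi.mul_apply]
    ring

theorem continuousOn_pohozaev (h : IsLaneEmdenSolution_s7 m ψ p q R u v u' v')
    (hψ : ContinuousOn ψ (Ici 0)) (hp : 0 ≤ p + 1) (hq : 0 ≤ q + 1) :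
    ContinuousOn (pohozaev m ψ p q u v u' v') (Icc 0 R) := by
  have hw := (hψ.mono (Icc_subset_Ici_self : Icc 0 R ⊆ Ici 0)).pow m
  have hU := h.continuousOn_u.rpow_const (p := p + 1) fun _ _ => Or.inr hp
  have hV := h.continuousOn_v.rpow_const (p := q + 1) fun _ _ => Or.inr hq
  exact ((continuousOn_modelVolume hψ R).mul (((h.continuousOn_u'.mul h.continuousOn_v').add
    (hU.div_const _)).add (hV.div_const _))).add (hw.mul
    (((h.continuousOn_u.mul h.continuousOn_v').div_const _).add
      ((h.continuousOn_u'.mul h.continuousOn_v).div_const _)))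

theorem antitoneOn_pohozaev (h : IsLaneEmdenSolution_s7 m ψ p q R u v u' v')
    (hψ : IsWarping ψ ψ') (hψ' : MonotoneOn ψ' (Ioi 0)) (hm : m ≠ 0) (hp : 0 < p + 1)
    (hq : 0 < q + 1) (hσ : 1 / (p + 1) + 1 / (q + 1) ≤ (m - 1) / (m + 1)) :
    AntitoneOn (pohozaev m ψ p q u v u' v') (Icc 0 R) := by
  refine antitoneOn_of_hasDerivWithinAt_nonpos (convex_Icc 0 R) (f' := fun r => u' r * v' r *
      ((1 + 1 / (p + 1) + 1 / (q + 1)) * ψ r ^ m - 2 * m * modelVolume m ψ r * ψ' r / ψ r))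
    (h.continuousOn_pohozaev hψ.continuousOn hp.le hq.le) (fun r hr => ?_) (fun r hr => ?_)
  · rw [interior_Icc] at hr ⊢
    exact (h.hasDerivAt_pohozaev hψ hp.ne' hq.ne' hr).hasDerivWithinAt
  rw [interior_Icc] at hr
  have huv : 0 < u' r * v' r := mul_pos_of_neg_of_neg
    (h.u'_neg hψ hm (Ioo_subset_Ioc_self hr)) (h.symm.u'_neg hψ hm (Ioo_subset_Ioc_self hr))
  refine mul_nonpos_of_nonneg_of_nonpos huv.le ?_
  set c := 1 + 1 / (p + 1) + 1 / (q + 1)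
  have hψr := hψ.pos r hr.1
  have hkey := hψ.pow_succ_le_mul_modelVolume_mul hψ' m hr.1
  have hVψ' : 0 ≤ modelVolume m ψ r * ψ' r := by nlinarith [pow_pos hψr (m + 1)]
  have hc : c * (m + 1) ≤ 2 * m := by
    rw [le_div_iff₀ (by positivity)] at hσ
    linarith
  rw [sub_nonpos, le_div_iff₀ hψr]
  calc c * ψ r ^ m * ψ r
      = c * ψ r ^ (m + 1) := by ring
    _ ≤ c * ((m + 1) * modelVolume m ψ r * ψ' r) := by gcongr
    _ = c * (m + 1) * (modelVolume m ψ r * ψ' r) := by ring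
    _ ≤ 2 * m * (modelVolume m ψ r * ψ' r) := mul_le_mul_of_nonneg_right hc hVψ'
    _ = 2 * m * modelVolume m ψ r * ψ' r := by ring

end IsLaneEmdenSolution_s7

theorem no_dirichlet_solution_on_ball_general
    (n : ℕ) (hn : 3 ≤ n) (ψ ψ' : ℝ → ℝ)
    (hψ0 : ψ 0 = 0)
    (hψpos : ∀ r > (0:ℝ), 0 < ψ r)
    (hψd : ∀ r > (0:ℝ), HasDerivAt ψ (ψ' r) r)
    (hψconv : ∀ r > (0:ℝ), ∀ s > (0:ℝ), r ≤ s → ψ' r ≤ ψ' s)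
    (hψcont : ContinuousOn ψ (Ici 0))
    (p q : ℝ) (hp : 0 < p) (hq : 0 < q)
    (hcs : 1 / (p + 1) + 1 / (q + 1) ≤ (n - 2) / n)
    (R : ℝ) (hR : 0 < R)
    (u v u' v' : ℝ → ℝ)
    (hucont : ContinuousOn u (Icc 0 R)) (hvcont : ContinuousOn v (Icc 0 R))
    (hu'cont : ContinuousOn u' (Icc 0 R)) (hv'cont : ContinuousOn v' (Icc 0 R))
    (hupos : ∀ r ∈ Ioo (0:ℝ) R, 0 < u r) (hvpos : ∀ r ∈ Ioo (0:ℝ) R, 0 < v r)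
    (hud : ∀ r ∈ Ioo (0:ℝ) R, HasDerivAt u (u' r) r)
    (hvd : ∀ r ∈ Ioo (0:ℝ) R, HasDerivAt v (v' r) r)
    (hequ : ∀ r ∈ Ioo (0:ℝ) R,
      HasDerivAt (fun s => ψ s ^ (n-1) * u' s) (-(ψ r ^ (n-1) * v r ^ q)) r)
    (heqv : ∀ r ∈ Ioo (0:ℝ) R,
      HasDerivAt (fun s => ψ s ^ (n-1) * v' s) (-(ψ r ^ (n-1) * u r ^ p)) r)
    (huR : u R = 0) (hvR : v R = 0) :
    False := by
  obtain ⟨m, rfl⟩ : ∃ m, n = m + 1 := ⟨n - 1, by omega⟩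
  simp only [Nat.add_sub_cancel] at hequ heqv
  have hψ : IsWarping ψ ψ' := ⟨hψ0, hψpos, hψd, hψcont⟩
  have hsol : IsLaneEmdenSolution_s7 m ψ p q R u v u' v' :=
    ⟨hucont, hvcont, hu'cont, hv'cont, hupos, hvpos, hud, hvd, hequ, heqv⟩
  have hm : m ≠ 0 := by omega
  have hσ : 1 / (p + 1) + 1 / (q + 1) ≤ ((m : ℝ) - 1) / (m + 1) := by
    convert hcs using 2 <;> push_cast <;> ring
  have hP := hsol.antitoneOn_pohozaev hψ (fun r hr s hs => hψconv r hr s hs) hm (by linarith)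
    (by linarith) hσ (left_mem_Icc.2 hR.le) (right_mem_Icc.2 hR.le) hR.le
  rw [pohozaev_zero hψ0 hm, pohozaev_of_eq_zero (by linarith) (by linarith) huR hvR] at hP
  have hR' : R ∈ Ioc 0 R := ⟨hR, le_rfl⟩
  have := mul_pos (modelVolume_pos (m := m) hψcont hψpos hR)
    (mul_pos_of_neg_of_neg (hsol.u'_neg hψ hm hR') (hsol.symm.u'_neg hψ hm hR'))
  linarith

/-- Dirichlet nonexistence on balls: on a Cartan-Hadamard model, in the
critical-supercritical regime, there is no positive radial solution of the
Lane-Emden system on `(0,R)` vanishing (both components) at `r = R`. -/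
theorem no_dirichlet_solution_on_ball
    (n : ℕ) (hn : 3 ≤ n) (ψ ψ' : ℝ → ℝ)
    (hψ0 : ψ 0 = 0) (hψ'0 : HasDerivAt ψ 1 0)
    (hψpos : ∀ r > (0:ℝ), 0 < ψ r)
    (hψd : ∀ r > (0:ℝ), HasDerivAt ψ (ψ' r) r)
    (hψconv : ∀ r > (0:ℝ), ∀ s > (0:ℝ), r ≤ s → ψ' r ≤ ψ' s)
    (hψcont : ContinuousOn ψ (Ici 0))
    (p q : ℝ) (hp : 0 < p) (hq : 0 < q)
    (hcs : 1 / (p + 1) + 1 / (q + 1) ≤ (n - 2) / n)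
    (R : ℝ) (hR : 0 < R)
    (u v u' v' : ℝ → ℝ)
    (hucont : ContinuousOn u (Icc 0 R)) (hvcont : ContinuousOn v (Icc 0 R))
    (hu'cont : ContinuousOn u' (Icc 0 R)) (hv'cont : ContinuousOn v' (Icc 0 R))
    (hu'0 : u' 0 = 0) (hv'0 : v' 0 = 0)
    (hu0 : 0 < u 0) (hv0 : 0 < v 0)
    (hupos : ∀ r ∈ Ioo (0:ℝ) R, 0 < u r) (hvpos : ∀ r ∈ Ioo (0:ℝ) R, 0 < v r)
    (hud : ∀ r ∈ Ioo (0:ℝ) R, HasDerivAt u (u' r) r)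
    (hvd : ∀ r ∈ Ioo (0:ℝ) R, HasDerivAt v (v' r) r)
    (hequ : ∀ r ∈ Ioo (0:ℝ) R,
      HasDerivAt (fun s => ψ s ^ (n-1) * u' s) (-(ψ r ^ (n-1) * v r ^ q)) r)
    (heqv : ∀ r ∈ Ioo (0:ℝ) R,
      HasDerivAt (fun s => ψ s ^ (n-1) * v' s) (-(ψ r ^ (n-1) * u r ^ p)) r)
    (huR : u R = 0) (hvR : v R = 0) :
    False :=
  no_dirichlet_solution_on_ball_general n hn ψ ψ' hψ0 hψpos hψd hψconv hψcont p q hp hq hcs R hR u v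
    u' v' hucont hvcont hu'cont hv'cont hupos hvpos hud hvd hequ heqv huR hvR
end

section
/- Let Θ ∈ L¹(0,∞) be positive with θ = ∫_0^∞ Θ, and p,q > 0 with pq > 1. Let v : [0,∞) → (0,∞) be C¹, decreasing with limit ℓ_v ≥ 0, satisfying the differential inequality v'(r) ≤ -(∫_r^∞ v^q Θ ds)^p Θ(r) for all r > 0. Then ℓ_v ≤ q^{(p+1)/(pq-1)} (p+1)^{(p+2)/(pq-1)} (q+1)^{-1/(pq-1)} (pq-1)^{-(p+1)/(pq-1)} · θ^{-(p+1)/(pq-1)}. -/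
/-!
Let `G r = ∫_r^∞ v^q Θ`, so that `G' = -v^q Θ`. The energy `v^(q+1)/(q+1) - G^(p+1)/(p+1)` is
nonincreasing by the differential inequality and is bounded below by `-G^(p+1)/(p+1) → 0`, hence
nonnegative; this gives `v^q ≥ K G^α` with `α = q(p+1)/(q+1) > 1`, so `G' ≤ -K G^α Θ` and integrating
`(G^(1-α))' ≥ (α-1) K Θ` from `0` yields `G(r)^(1-α) ≥ (α-1) K ∫_0^r Θ`. Since also
`G(r) ≥ ℓ^q ∫_r^∞ Θ`, evaluating both bounds at the point `r₀` with
`∫_0^r₀ Θ = (q+1)θ/(q(p+1))`, which optimizes the resulting estimate, bounds `ℓ`.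
-/

open Filter MeasureTheory Set Topology

theorem AntitoneOn.le_of_tendsto_atTop_s10 {α β : Type*} [Preorder α] [IsDirectedOrder α] [Nonempty α]
    [TopologicalSpace β] [Preorder β] [ClosedIicTopology β] {f : α → β} {a : α} {L : β}
    (hf : AntitoneOn f (Ici a)) (hL : Tendsto f atTop (𝓝 L)) : L ≤ f a :=
  le_of_tendsto hL <| by
    filter_upwards [eventually_ge_atTop a] with x hx using hf self_mem_Ici hx hx

theorem setIntegral_Ioi_pos {f : ℝ → ℝ} {r : ℝ} (hf : IntegrableOn f (Ioi r))
    (hpos : ∀ s > r, 0 < f s) : 0 < ∫ s in Ioi r, f s := by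
  rw [setIntegral_pos_iff_support_of_nonneg_ae
    ((ae_restrict_iff' measurableSet_Ioi).2 (ae_of_all _ fun s hs => (hpos s hs).le)) hf]
  have : Ioi r ⊆ Function.support f ∩ Ioi r := fun s hs => ⟨(hpos s hs).ne', hs⟩
  exact (measure_mono this).trans_lt' (by simp)

theorem hasDerivAt_setIntegral_Ioi {E : Type*} [NormedAddCommGroup E] [NormedSpace ℝ E]
    [CompleteSpace E] {f : ℝ → E} {a r : ℝ}
    (hf : IntegrableOn f (Ioi a)) (hfc : ContinuousOn f (Ioi a)) (hr : a < r) :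
    HasDerivAt (fun x => ∫ s in Ioi x, f s) (-f r) r := by
  have hprim : HasDerivAt (fun x => ∫ s in a..x, f s) (f r) r :=
    intervalIntegral.integral_hasDerivAt_right
      ((intervalIntegrable_iff_integrableOn_Ioc_of_le hr.le).2 (hf.mono_set Ioc_subset_Ioi_self))
      (hfc.stronglyMeasurableAtFilter isOpen_Ioi r hr) (hfc.continuousAt (Ioi_mem_nhds hr))
  refine (hprim.const_sub (∫ s in Ioi a, f s)).congr_of_eventuallyEq ?_
  filter_upwards [Ioi_mem_nhds hr] with x hx
  rw [← intervalIntegral.integral_Ioi_sub_Ioi hf (le_of_lt hx), sub_sub_cancel]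

theorem rpow_mul_setIntegral_Ioi_le {v Θ : ℝ → ℝ} {a q ℓ : ℝ} (hℓ : 0 ≤ ℓ) (hq : 0 ≤ q)
    (hv : ∀ s > a, ℓ ≤ v s) (hΘ : ∀ s > a, 0 ≤ Θ s) (hΘi : IntegrableOn Θ (Ioi a))
    (hvi : IntegrableOn (fun s => v s ^ q * Θ s) (Ioi a)) :
    ℓ ^ q * ∫ s in Ioi a, Θ s ≤ ∫ s in Ioi a, v s ^ q * Θ s := by
  rw [← integral_const_mul]
  refine setIntegral_mono_on (hΘi.const_mul _) hvi measurableSet_Ioi fun s hs => ?_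
  have := hv s hs
  have := hΘ s hs
  gcongr

theorem rpow_div_le_rpow_div_of_hasDerivAt {v v' G Θ : ℝ → ℝ} {p q a : ℝ}
    (hp : 0 < p + 1) (hq : 0 < q + 1) (hv : ∀ r > a, 0 < v r) (hG : ∀ r > a, 0 < G r)
    (hvd : ∀ r > a, HasDerivAt v (v' r) r) (hGd : ∀ r > a, HasDerivAt G (-(v r ^ q * Θ r)) r)
    (hineq : ∀ r > a, v' r ≤ -(G r ^ p) * Θ r) (hG0 : Tendsto G atTop (𝓝 0)) :
    ∀ r > a, G r ^ (p + 1) / (p + 1) ≤ v r ^ (q + 1) / (q + 1) := by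
  set Φ : ℝ → ℝ := fun r => v r ^ (q + 1) / (q + 1) - G r ^ (p + 1) / (p + 1)
  have hΦd : ∀ r > a, HasDerivAt Φ (v r ^ q * (v' r + G r ^ p * Θ r)) r := by
    intro r hr
    have hv1 := ((hvd r hr).rpow_const (p := q + 1) (Or.inl (hv r hr).ne')).div_const (q + 1)
    have hG1 := ((hGd r hr).rpow_const (p := p + 1) (Or.inl (hG r hr).ne')).div_const (p + 1)
    refine (hv1.sub hG1).congr_deriv ?_
    simp only [add_sub_cancel_right]
    field_simp
    ring
  have hΦanti : AntitoneOn Φ (Ioi a) :=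
    antitoneOn_of_hasDerivWithinAt_nonpos (convex_Ioi a)
      (fun r hr => (hΦd r hr).continuousAt.continuousWithinAt)
      (fun r hr => (hΦd r (interior_subset hr)).hasDerivWithinAt)
      fun r hr => mul_nonpos_of_nonneg_of_nonpos
        (Real.rpow_nonneg (hv r (interior_subset hr)).le q)
        (by linarith [hineq r (interior_subset hr)])
  intro r hr
  suffices 0 ≤ Φ r by linarith
  have hlim : Tendsto (fun x => -(G x ^ (p + 1) / (p + 1))) atTop (𝓝 0) := by
    simpa [Real.zero_rpow hp.ne'] using
      (((Real.continuousAt_rpow_const 0 (p + 1) (Or.inr hp.le)).tendsto.comp hG0).div_const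
        (p + 1)).neg
  refine le_of_tendsto hlim ?_
  filter_upwards [eventually_ge_atTop r] with x hx
  have hx' : a < x := hr.trans_le hx
  calc -(G x ^ (p + 1) / (p + 1)) ≤ Φ x := by
        have : 0 ≤ v x ^ (q + 1) / (q + 1) := div_nonneg (Real.rpow_nonneg (hv x hx').le _) hq.le
        linarith
    _ ≤ Φ r := hΦanti hr hx' hx

theorem mul_rpow_le_rpow_of_rpow_div_le {x y p q : ℝ} (hx : 0 ≤ x) (hy : 0 ≤ y)
    (hp : 0 < p + 1) (hq : 0 ≤ q) (h : x ^ (p + 1) / (p + 1) ≤ y ^ (q + 1) / (q + 1)) :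
    ((q + 1) / (p + 1)) ^ (q / (q + 1)) * x ^ (q * (p + 1) / (q + 1)) ≤ y ^ q := by
  have hq1 : 0 < q + 1 := by linarith
  have h' : (q + 1) / (p + 1) * x ^ (p + 1) ≤ y ^ (q + 1) := by
    rw [div_le_div_iff₀ hp hq1] at h
    rw [div_mul_eq_mul_div, div_le_iff₀ hp]
    linarith
  calc ((q + 1) / (p + 1)) ^ (q / (q + 1)) * x ^ (q * (p + 1) / (q + 1))
      = ((q + 1) / (p + 1) * x ^ (p + 1)) ^ (q / (q + 1)) := by
        rw [Real.mul_rpow (by positivity) (by positivity), ← Real.rpow_mul hx]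
        ring_nf
    _ ≤ (y ^ (q + 1)) ^ (q / (q + 1)) := by gcongr
    _ = y ^ q := by rw [← Real.rpow_mul hy]; field_simp

theorem mul_sub_le_rpow_sub_rpow_of_hasDerivAt {G g H Θ : ℝ → ℝ} {K α a : ℝ} (hα : 1 ≤ α)
    (hGc : ContinuousOn G (Ici a)) (hG : ∀ r ≥ a, 0 < G r)
    (hGd : ∀ r > a, HasDerivAt G (-g r) r) (hHc : ContinuousOn H (Ici a))
    (hHd : ∀ r > a, HasDerivAt H (-Θ r) r) (hg : ∀ r > a, K * G r ^ α * Θ r ≤ g r) :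
    ∀ r ≥ a, (α - 1) * K * (H a - H r) ≤ G r ^ (1 - α) - G a ^ (1 - α) := by
  set Ψ : ℝ → ℝ := fun r => G r ^ (1 - α) + (α - 1) * K * H r
  have hΨd : ∀ r > a, HasDerivAt Ψ ((α - 1) * (G r ^ (-α) * g r - K * Θ r)) r := by
    intro r hr
    have hG1 := (hGd r hr).rpow_const (p := 1 - α) (Or.inl (hG r hr.le).ne')
    refine (hG1.add ((hHd r hr).const_mul ((α - 1) * K))).congr_deriv ?_
    rw [show 1 - α - 1 = -α by ring]
    ring
  have hΨmono : MonotoneOn Ψ (Ici a) := by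
    refine monotoneOn_of_hasDerivWithinAt_nonneg (convex_Ici a)
      (f' := fun r => (α - 1) * (G r ^ (-α) * g r - K * Θ r))
      (hGc.rpow_const (fun r hr => Or.inl (hG r hr).ne') |>.add (continuousOn_const.mul hHc)) ?_ ?_
    · rw [interior_Ici]
      exact fun r hr => (hΨd r hr).hasDerivWithinAt
    · rw [interior_Ici]
      intro r hr
      have : K * Θ r ≤ G r ^ (-α) * g r := by
        calc K * Θ r = G r ^ (-α) * (K * G r ^ α * Θ r) := by
              have := (Real.rpow_pos_of_pos (hG r hr.le) α).ne'
              rw [Real.rpow_neg (hG r hr.le).le]; field_simp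
          _ ≤ G r ^ (-α) * g r :=
              mul_le_mul_of_nonneg_left (hg r hr) (Real.rpow_nonneg (hG r hr.le).le _)
      exact mul_nonneg (by linarith) (by linarith)
  intro r hr
  have := hΨmono self_mem_Ici hr hr
  simp only [Ψ] at this
  linarith

noncomputable def laneEmdenBound (p q θ : ℝ) : ℝ :=
  q ^ ((p + 1) / (p * q - 1)) * (p + 1) ^ ((p + 2) / (p * q - 1)) *
    (q + 1) ^ (-(1 / (p * q - 1))) * (p * q - 1) ^ (-((p + 1) / (p * q - 1))) *
    θ ^ (-((p + 1) / (p * q - 1)))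

open Real in
theorem le_laneEmdenBound_of_le_rpow {p q θ ℓ : ℝ} (hp : 0 < p) (hq : 0 < q) (hpq : 1 < p * q)
    (hθ : 0 < θ) (hℓ : 0 < ℓ)
    (h : (q * (p + 1) / (q + 1) - 1) * ((q + 1) / (p + 1)) ^ (q / (q + 1)) *
        ((q + 1) * θ / (q * (p + 1))) ≤
      (ℓ ^ q * ((p * q - 1) * θ / (q * (p + 1)))) ^ (1 - q * (p + 1) / (q + 1))) :
    ℓ ≤ laneEmdenBound p q θ := by
  have hq1 : 0 < q + 1 := by linarith
  have hp1 : 0 < p + 1 := by linarith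
  rw [show q * (p + 1) / (q + 1) - 1 = (p * q - 1) / (q + 1) by field_simp; ring,
    show 1 - q * (p + 1) / (q + 1) = -((p * q - 1) / (q + 1)) by field_simp; ring] at h
  unfold laneEmdenBound
  set m := p * q - 1 with hm_def
  have hm : 0 < m := by linarith
  rw [← log_le_log_iff (by positivity) (by positivity)] at h
  rw [← log_le_log_iff hℓ (by positivity)]
  simp (disch := positivity) only [log_mul, log_div, log_rpow] at h ⊢
  have h' := mul_nonneg (by positivity : 0 ≤ (q + 1) / (q * m)) (sub_nonneg.2 h)
  refine sub_nonneg.1 (h'.trans_eq ?_)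
  field_simp
  rw [hm_def]
  ring

theorem le_laneEmdenBound_of_tail_bounds {G H : ℝ → ℝ} {a p q ℓ : ℝ} (hp : 0 < p) (hq : 0 < q)
    (hpq : 1 < p * q) (hℓ : 0 < ℓ) (hHc : ContinuousOn H (Ici a)) (hHa : 0 < H a)
    (hH : Tendsto H atTop (𝓝 0)) (hlow : ∀ r ≥ a, ℓ ^ q * H r ≤ G r)
    (hup : ∀ r ≥ a, (q * (p + 1) / (q + 1) - 1) * ((q + 1) / (p + 1)) ^ (q / (q + 1)) *
      (H a - H r) ≤ G r ^ (1 - q * (p + 1) / (q + 1))) :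
    ℓ ≤ laneEmdenBound p q (H a) := by
  have hm : 0 < p * q - 1 := by linarith
  set H₀ := (p * q - 1) * H a / (q * (p + 1))
  have hH₀ : 0 < H₀ := by positivity
  obtain ⟨r₀, hr₀, hHr₀⟩ : H₀ ∈ H '' Ici a :=
    isPreconnected_Ici.intermediate_value_Ioc self_mem_Ici (le_principal_iff.2 (Ici_mem_atTop a))
      hHc hH ⟨hH₀, by rw [div_le_iff₀ (by positivity)]; nlinarith⟩
  refine le_laneEmdenBound_of_le_rpow hp hq hpq hHa hℓ ?_
  calc _ = (q * (p + 1) / (q + 1) - 1) * ((q + 1) / (p + 1)) ^ (q / (q + 1)) * (H a - H r₀) := by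
        rw [hHr₀]; simp only [H₀]; field_simp; ring
    _ ≤ G r₀ ^ (1 - q * (p + 1) / (q + 1)) := hup r₀ hr₀
    _ ≤ (ℓ ^ q * H₀) ^ (1 - q * (p + 1) / (q + 1)) :=
        Real.rpow_le_rpow_of_nonpos (by positivity) (hHr₀ ▸ hlow r₀ hr₀) (by
          rw [sub_nonpos, le_div_iff₀ (by linarith)]; nlinarith)

theorem limit_bound_of_integral_inequality_general
    (Θ : ℝ → ℝ) (hΘpos : ∀ r > (0:ℝ), 0 < Θ r) (hΘcont : Continuous Θ)
    (hΘint : IntegrableOn Θ (Ioi (0:ℝ)))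
    (p q : ℝ) (hp : 0 < p) (hq : 0 < q) (hpq : 1 < p * q)
    (v v' : ℝ → ℝ)
    (hvpos : ∀ r ≥ (0:ℝ), 0 < v r)
    (hvd : ∀ r > (0:ℝ), HasDerivAt v (v' r) r)
    (hvanti : AntitoneOn v (Ici 0))
    (hvqint : IntegrableOn (fun s => v s ^ q * Θ s) (Ioi (0:ℝ)))
    (ℓv : ℝ) (hvlim : Tendsto v atTop (nhds ℓv))
    (hineq : ∀ r > (0:ℝ), v' r ≤ -((∫ s in Ioi r, v s ^ q * Θ s) ^ p) * Θ r) :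
    ℓv ≤ q ^ ((p + 1) / (p * q - 1)) * (p + 1) ^ ((p + 2) / (p * q - 1)) *
          (q + 1) ^ (-(1 / (p * q - 1))) * (p * q - 1) ^ (-((p + 1) / (p * q - 1))) *
          (∫ r in Ioi (0:ℝ), Θ r) ^ (-((p + 1) / (p * q - 1))) := by
  set G : ℝ → ℝ := fun r => ∫ s in Ioi r, v s ^ q * Θ s
  set H : ℝ → ℝ := fun r => ∫ s in Ioi r, Θ s
  have hH : ∀ r ≥ 0, 0 < H r := fun r hr =>
    setIntegral_Ioi_pos (hΘint.mono_set (Ioi_subset_Ioi hr)) fun s hs => hΘpos s (hr.trans_lt hs)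
  rcases le_or_gt ℓv 0 with hℓ | hℓ
  · exact hℓ.trans (by have := hH 0 le_rfl; positivity)
  have hlow : ∀ r ≥ 0, ℓv ^ q * H r ≤ G r := fun r hr =>
    rpow_mul_setIntegral_Ioi_le hℓ.le hq.le
      (fun s hs => (hvanti.mono (Ici_subset_Ici.2 (hr.trans hs.le))).le_of_tendsto_atTop_s10 hvlim)
      (fun s hs => (hΘpos s (hr.trans_lt hs)).le)
      (hΘint.mono_set (Ioi_subset_Ioi hr)) (hvqint.mono_set (Ioi_subset_Ioi hr))
  have hG : ∀ r ≥ 0, 0 < G r := fun r hr =>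
    (mul_pos (Real.rpow_pos_of_pos hℓ q) (hH r hr)).trans_le (hlow r hr)
  have hGd : ∀ r > 0, HasDerivAt G (-(v r ^ q * Θ r)) r :=
    fun r => hasDerivAt_setIntegral_Ioi hvqint fun s hs =>
      ((hvd s hs).continuousAt.rpow_const (Or.inl (hvpos s hs.le).ne')).mul
        hΘcont.continuousAt |>.continuousWithinAt
  have henergy := rpow_div_le_rpow_div_of_hasDerivAt (by linarith) (by linarith)
    (fun r hr => hvpos r hr.le) (fun r hr => hG r hr.le) hvd hGd hineq
    (tendsto_integral_Ioi_zero tendsto_id)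
  have hcomp := mul_sub_le_rpow_sub_rpow_of_hasDerivAt (α := q * (p + 1) / (q + 1))
    (by rw [le_div_iff₀ (by linarith)]; nlinarith)
    hvqint.continuousOn_Ici_primitive_Ioi hG hGd hΘint.continuousOn_Ici_primitive_Ioi
    (fun r => hasDerivAt_setIntegral_Ioi hΘint hΘcont.continuousOn)
    fun r hr => mul_le_mul_of_nonneg_right (mul_rpow_le_rpow_of_rpow_div_le (hG r hr.le).le
      (hvpos r hr.le).le (by linarith) hq.le (henergy r hr)) (hΘpos r hr).le
  exact le_laneEmdenBound_of_tail_bounds hp hq hpq hℓ hΘint.continuousOn_Ici_primitive_Ioi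
    (hH 0 le_rfl) (tendsto_integral_Ioi_zero tendsto_id) hlow
    fun r hr => (hcomp r hr).trans (sub_le_self _ (Real.rpow_nonneg (hG 0 le_rfl).le _))

/-- Quantitative bound on the limit at infinity `ℓ_v` of a positive decreasing function `v`
satisfying the integral-differential inequality `v' ≤ -(∫_r^∞ v^q Θ)^p Θ`. -/
theorem limit_bound_of_integral_inequality
    (Θ : ℝ → ℝ) (hΘpos : ∀ r > (0:ℝ), 0 < Θ r) (hΘcont : Continuous Θ)
    (hΘint : IntegrableOn Θ (Ioi (0:ℝ)))
    (p q : ℝ) (hp : 0 < p) (hq : 0 < q) (hpq : 1 < p * q)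
    (v v' : ℝ → ℝ)
    (hvpos : ∀ r ≥ (0:ℝ), 0 < v r)
    (hvd : ∀ r > (0:ℝ), HasDerivAt v (v' r) r)
    (hvanti : AntitoneOn v (Ici 0))
    (hvqint : IntegrableOn (fun s => v s ^ q * Θ s) (Ioi (0:ℝ)))
    (ℓv : ℝ) (hℓv : 0 ≤ ℓv) (hvlim : Tendsto v atTop (nhds ℓv))
    (hineq : ∀ r > (0:ℝ), v' r ≤ -((∫ s in Ioi r, v s ^ q * Θ s) ^ p) * Θ r) :
    ℓv ≤ q ^ ((p + 1) / (p * q - 1)) * (p + 1) ^ ((p + 2) / (p * q - 1)) *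
          (q + 1) ^ (-(1 / (p * q - 1))) * (p * q - 1) ^ (-((p + 1) / (p * q - 1))) *
          (∫ r in Ioi (0:ℝ), Θ r) ^ (-((p + 1) / (p * q - 1))) :=
  limit_bound_of_integral_inequality_general Θ hΘpos hΘcont hΘint p q hp hq hpq v v' hvpos hvd
    hvanti hvqint ℓv hvlim hineq
end

section
/- Let f : [1,∞) → (0,∞) be C¹, increasing to infinity with f' > 0. Then ∫_1^∞ f(s)²/f'(s) ds = +∞. More precisely, for all r ≥ 1, ∫_r^∞ f²/f' ds ≥ f(r) ∫_r^∞ f/f' ds, and limsup_{r→∞} f(r)∫_r^∞ f/f' ds = +∞. -/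
open Filter MeasureTheory Set Real

/-!
Write `H r = ∫_r^∞ f/f'`. Since `f` is increasing, `f r * H r ≤ ∫_r^∞ f²/f'`, so everything
follows once `f r * H r` is unbounded. Suppose instead `f r * H r ≤ C` for large `r`.
Cauchy–Schwarz for `f'/f` and `f/f'` on `[r, r + δ]` gives
`δ² ≤ log (f (r + δ) / f r) * H r ≤ log (f (r + δ) / f r) * C / f r`,
so `f` at least quadruples over a step of length `√(C log 4 / f r)`. Along the iterates these
steps shrink geometrically, so `f` would be unbounded on a bounded interval, contradicting
monotonicity.
-/

theorem strictMonoOn_of_hasDerivAt_pos {f f' : ℝ → ℝ} {s : Set ℝ} (hs : Convex ℝ s)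
    (hderiv : ∀ x ∈ s, HasDerivAt f (f' x) x) (hf'pos : ∀ x ∈ s, 0 < f' x) :
    StrictMonoOn f s :=
  strictMonoOn_of_hasDerivWithinAt_pos hs
    (HasDerivAt.continuousOn hderiv) (fun x hx => (hderiv x (interior_subset hx)).hasDerivWithinAt)
    fun x hx => hf'pos x (interior_subset hx)

theorem sq_sub_le_integral_mul_integral_inv {g : ℝ → ℝ} {a b : ℝ} (hab : a ≤ b)
    (hg : ContinuousOn g (Icc a b)) (hpos : ∀ x ∈ Icc a b, 0 < g x) :
    (b - a) ^ 2 ≤ (∫ x in a..b, g x) * ∫ x in a..b, (g x)⁻¹ := by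
  have hgi : IntervalIntegrable g volume a b := hg.intervalIntegrable_of_Icc hab
  have hgi' : IntervalIntegrable (fun x => (g x)⁻¹) volume a b :=
    (hg.inv₀ fun x hx => (hpos x hx).ne').intervalIntegrable_of_Icc hab
  -- `∫ (t g - 1)² / g` is a nonnegative quadratic polynomial in `t`.
  have hquad : ∀ t : ℝ, 0 ≤ (∫ x in a..b, g x) * (t * t) + -2 * (b - a) * t +
      ∫ x in a..b, (g x)⁻¹ := by
    intro t
    have hexpand : ∫ x in a..b, (t * t * g x - 2 * t + (g x)⁻¹) =
        (∫ x in a..b, g x) * (t * t) + -2 * (b - a) * t + ∫ x in a..b, (g x)⁻¹ := by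
      rw [intervalIntegral.integral_add ((hgi.const_mul _).sub intervalIntegrable_const) hgi',
        intervalIntegral.integral_sub (hgi.const_mul _) intervalIntegrable_const,
        intervalIntegral.integral_const_mul, intervalIntegral.integral_const, smul_eq_mul]
      ring
    rw [← hexpand]
    refine intervalIntegral.integral_nonneg hab fun x hx => ?_
    have hgx := hpos x hx
    have hsq : t * t * g x - 2 * t + (g x)⁻¹ = (t * g x - 1) ^ 2 / g x := by
      field_simp
      ring
    rw [hsq]
    positivity
  have := discrim_le_zero hquad
  rw [discrim] at this
  nlinarith

theorem sq_sub_le_log_div_mul_integral_div {f f' : ℝ → ℝ} {a b : ℝ} (hab : a ≤ b)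
    (hderiv : ∀ x ∈ Icc a b, HasDerivAt f (f' x) x) (hf' : ContinuousOn f' (Icc a b))
    (hfpos : ∀ x ∈ Icc a b, 0 < f x) (hf'pos : ∀ x ∈ Icc a b, 0 < f' x) :
    (b - a) ^ 2 ≤ log (f b / f a) * ∫ x in a..b, f x / f' x := by
  have hlogderiv : ContinuousOn (fun x => f' x / f x) (Icc a b) :=
    hf'.div (HasDerivAt.continuousOn hderiv) fun x hx => (hfpos x hx).ne'
  have hftc : ∫ x in a..b, f' x / f x = log (f b / f a) := by
    rw [log_div (hfpos b ⟨hab, le_rfl⟩).ne' (hfpos a ⟨le_rfl, hab⟩).ne']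
    refine intervalIntegral.integral_eq_sub_of_hasDerivAt (f := fun y => log (f y)) (fun x hx => ?_)
      (hlogderiv.intervalIntegrable_of_Icc hab)
    rw [uIcc_of_le hab] at hx
    exact (hderiv x hx).log (hfpos x hx).ne'
  simpa only [hftc, inv_div] using
    sq_sub_le_integral_mul_integral_inv hab hlogderiv fun x hx => div_pos (hf'pos x hx) (hfpos x hx)

theorem sq_sub_mul_le_mul_log_div {f f' : ℝ → ℝ} {a b C : ℝ} (hab : a ≤ b)
    (hderiv : ∀ x ∈ Icc a b, HasDerivAt f (f' x) x) (hf' : ContinuousOn f' (Icc a b))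
    (hfpos : ∀ x ∈ Icc a b, 0 < f x) (hf'pos : ∀ x ∈ Icc a b, 0 < f' x)
    (hI : f a * ∫ x in a..b, f x / f' x ≤ C) :
    (b - a) ^ 2 * f a ≤ C * log (f b / f a) := by
  have ha : a ∈ Icc a b := ⟨le_rfl, hab⟩
  have hb : b ∈ Icc a b := ⟨hab, le_rfl⟩
  have hfab : f a ≤ f b :=
    (strictMonoOn_of_hasDerivAt_pos (convex_Icc a b) hderiv hf'pos).monotoneOn ha hb hab
  have hlog : 0 ≤ log (f b / f a) := log_nonneg ((one_le_div (hfpos a ha)).2 hfab)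
  calc (b - a) ^ 2 * f a
      ≤ (log (f b / f a) * ∫ x in a..b, f x / f' x) * f a :=
        mul_le_mul_of_nonneg_right (sq_sub_le_log_div_mul_integral_div hab hderiv hf' hfpos hf'pos)
          (hfpos a ha).le
    _ = log (f b / f a) * (f a * ∫ x in a..b, f x / f' x) := by ring
    _ ≤ C * log (f b / f a) := by rw [mul_comm C]; exact mul_le_mul_of_nonneg_left hI hlog

theorem ofReal_intervalIntegral_le_lintegral_Ioi {g : ℝ → ℝ} {a b : ℝ} (hab : a ≤ b)
    (hg : ContinuousOn g (Icc a b)) (hnonneg : ∀ x ∈ Icc a b, 0 ≤ g x) :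
    ENNReal.ofReal (∫ x in a..b, g x) ≤ ∫⁻ x in Ioi a, ENNReal.ofReal (g x) := by
  rw [intervalIntegral.integral_of_le hab, ofReal_integral_eq_lintegral_ofReal
    (hg.integrableOn_Icc.mono_set Ioc_subset_Icc_self)
    ((ae_restrict_iff' measurableSet_Ioc).2
      (ae_of_all _ fun x hx => hnonneg x (Ioc_subset_Icc_self hx)))]
  exact lintegral_mono_set Ioc_subset_Ioi_self

theorem ofReal_mul_lintegral_Ioi_le {f w : ℝ → ℝ} {r : ℝ} (hmono : MonotoneOn f (Ici r))
    (hf : 0 ≤ f r) :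
    ENNReal.ofReal (f r) * ∫⁻ s in Ioi r, ENNReal.ofReal (w s) ≤
      ∫⁻ s in Ioi r, ENNReal.ofReal (f s * w s) := by
  rw [← lintegral_const_mul' _ _ ENNReal.ofReal_ne_top]
  refine setLIntegral_mono' measurableSet_Ioi fun s hs => ?_
  have hrs : f r ≤ f s := hmono self_mem_Ici (mem_Ici.2 (le_of_lt hs)) (le_of_lt hs)
  rw [ENNReal.ofReal_mul (hf.trans hrs)]
  exact mul_le_mul_left (ENNReal.ofReal_le_ofReal hrs) _

theorem false_of_four_mul_le_apply_add_sqrt {f : ℝ → ℝ} {R c : ℝ} (hc : 0 ≤ c)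
    (hmono : MonotoneOn f (Ici R)) (hpos : 0 < f R)
    (hstep : ∀ r ≥ R, 4 * f r ≤ f (r + √(c / f r))) : False := by
  set K := √(c / f R)
  set x : ℕ → ℝ := fun n => (fun r => r + √(c / f r))^[n] R
  have hxsucc : ∀ n, x (n + 1) = x n + √(c / f (x n)) := fun n =>
    Function.iterate_succ_apply' _ _ _
  have hinv : ∀ n : ℕ,
      R ≤ x n ∧ f R * 4 ^ n ≤ f (x n) ∧ x n ≤ R + 2 * K - 2 * K / 2 ^ n := by
    intro n
    induction n with
    | zero => simp [x]
    | succ n ih =>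
      obtain ⟨hRx, hfx, hxle⟩ := ih
      have h4 : ((2 : ℝ) ^ n) ^ 2 = 4 ^ n := by rw [← pow_mul, mul_comm, pow_mul]; norm_num
      have hstep_le : √(c / f (x n)) ≤ K / 2 ^ n :=
        calc √(c / f (x n)) ≤ √(c / f R / (2 ^ n) ^ 2) := by
              refine sqrt_le_sqrt ?_
              rw [h4, div_div]
              exact div_le_div_of_nonneg_left hc (by positivity) hfx
          _ = K / 2 ^ n := by rw [sqrt_div' _ (by positivity), sqrt_sq (by positivity)]
      have hhalf : 2 * K / 2 ^ n = K / 2 ^ n + 2 * K / 2 ^ (n + 1) := by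
        rw [pow_succ]
        field_simp
        ring
      rw [hxsucc]
      refine ⟨by linarith [sqrt_nonneg (c / f (x n))], ?_, by linarith⟩
      rw [pow_succ]
      nlinarith [hstep (x n) hRx]
  obtain ⟨n, hn⟩ := pow_unbounded_of_one_lt (f (R + 2 * K) / f R) (by norm_num : (1 : ℝ) < 4)
  obtain ⟨hRx, hfx, hxle⟩ := hinv n
  have hKnn : 0 ≤ 2 * K / 2 ^ n := by positivity
  have hbound := hmono hRx (show R ≤ R + 2 * K by linarith) (by linarith)
  rw [div_lt_iff₀ hpos] at hn
  linarith

theorem limsup_ofReal_mul_lintegral_div_eq_top {f f' : ℝ → ℝ} {a : ℝ}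
    (hderiv : ∀ x ∈ Ici a, HasDerivAt f (f' x) x) (hf' : ContinuousOn f' (Ici a))
    (hfpos : ∀ x ∈ Ici a, 0 < f x) (hf'pos : ∀ x ∈ Ici a, 0 < f' x) :
    limsup (fun r => ENNReal.ofReal (f r) * ∫⁻ s in Ioi r, ENNReal.ofReal (f s / f' s))
      atTop = ⊤ := by
  by_contra hne
  obtain ⟨C, hlt, -⟩ := ENNReal.lt_iff_exists_nnreal_btwn.1 (lt_top_iff_ne_top.2 hne)
  have hCpos : (0 : ℝ) < C := ENNReal.coe_pos.1 (pos_of_gt hlt)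
  obtain ⟨R, hR⟩ :=
    eventually_atTop.1 ((eventually_lt_of_limsup_lt hlt).and (eventually_ge_atTop a))
  have hmono : MonotoneOn f (Ici a) :=
    (strictMonoOn_of_hasDerivAt_pos (convex_Ici a) hderiv hf'pos).monotoneOn
  refine false_of_four_mul_le_apply_add_sqrt (c := C * log 4) (by positivity)
    (hmono.mono (Ici_subset_Ici.2 (hR R le_rfl).2)) (hfpos R (hR R le_rfl).2) fun r hr => ?_
  obtain ⟨hbound, har⟩ := hR r hr
  set δ := √(C * log 4 / f r)
  set I := ∫ x in r..r + δ, f x / f' x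
  have hfr := hfpos r har
  have hrδ : r ≤ r + δ := le_add_of_nonneg_right (sqrt_nonneg _)
  have hsub : Icc r (r + δ) ⊆ Ici a := fun x hx => le_trans har hx.1
  have hI : f r * I ≤ C := by
    have hquot : ContinuousOn (fun x => f x / f' x) (Icc r (r + δ)) :=
      (HasDerivAt.continuousOn fun x hx => hderiv x (hsub hx)).div (hf'.mono hsub)
        fun x hx => (hf'pos x (hsub hx)).ne'
    refine (ENNReal.ofReal_le_ofReal_iff C.coe_nonneg).1 ?_
    rw [ENNReal.ofReal_mul hfr.le, ENNReal.ofReal_coe_nnreal]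
    refine le_trans (mul_le_mul_right ?_ _) hbound.le
    exact ofReal_intervalIntegral_le_lintegral_Ioi hrδ hquot
      fun x hx => (div_pos (hfpos x (hsub hx)) (hf'pos x (hsub hx))).le
  have hsq := sq_sub_mul_le_mul_log_div hrδ (fun x hx => hderiv x (hsub hx)) (hf'.mono hsub)
    (fun x hx => hfpos x (hsub hx)) (fun x hx => hf'pos x (hsub hx)) hI
  rw [add_sub_cancel_left, sq_sqrt (by positivity), div_mul_cancel₀ _ hfr.ne'] at hsq
  have hlog : log 4 ≤ log (f (r + δ) / f r) := le_of_mul_le_mul_left hsq hCpos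
  rwa [log_le_log_iff (by norm_num) (div_pos (hfpos _ (hsub ⟨hrδ, le_rfl⟩)) hfr),
    le_div_iff₀ hfr] at hlog

theorem divergence_of_volume_integral_general
    (f f' : ℝ → ℝ)
    (hderiv : ∀ x ∈ Ici (1:ℝ), HasDerivAt f (f' x) x)
    (hf'cont : ContinuousOn f' (Ici (1:ℝ)))
    (hfpos : ∀ x ∈ Ici (1:ℝ), 0 < f x)
    (hf'pos : ∀ x ∈ Ici (1:ℝ), 0 < f' x) :
    (∫⁻ s in Ioi (1:ℝ), ENNReal.ofReal (f s ^ 2 / f' s)) = ⊤ ∧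
    (∀ r ≥ (1:ℝ),
      ENNReal.ofReal (f r) * ∫⁻ s in Ioi r, ENNReal.ofReal (f s / f' s) ≤
        ∫⁻ s in Ioi r, ENNReal.ofReal (f s ^ 2 / f' s)) ∧
    Filter.limsup
      (fun r : ℝ => ENNReal.ofReal (f r) * ∫⁻ s in Ioi r, ENNReal.ofReal (f s / f' s))
      atTop = ⊤ := by
  have hmono : MonotoneOn f (Ici 1) :=
    (strictMonoOn_of_hasDerivAt_pos (convex_Ici 1) hderiv hf'pos).monotoneOn
  have hmul_le : ∀ r ≥ (1:ℝ),
      ENNReal.ofReal (f r) * ∫⁻ s in Ioi r, ENNReal.ofReal (f s / f' s) ≤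
        ∫⁻ s in Ioi r, ENNReal.ofReal (f s ^ 2 / f' s) := fun r hr => by
    simpa only [sq, mul_div_assoc] using
      ofReal_mul_lintegral_Ioi_le (hmono.mono (Ici_subset_Ici.2 hr)) (hfpos r hr).le
  have hlimsup := limsup_ofReal_mul_lintegral_div_eq_top hderiv hf'cont hfpos hf'pos
  refine ⟨top_unique ?_, hmul_le, hlimsup⟩
  rw [← hlimsup]
  refine limsup_le_of_le (by isBoundedDefault) (eventually_atTop.2 ⟨1, fun r hr => ?_⟩)
  exact (hmul_le r hr).trans (lintegral_mono_set (Ioi_subset_Ioi hr))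

/-- For `f` C¹, positive, increasing to infinity with `f' > 0` on `[1,∞)`:
`∫_1^∞ f²/f' = ∞`, the pointwise bound `∫_r^∞ f²/f' ≥ f(r) ∫_r^∞ f/f'`, and
`limsup_{r→∞} f(r) ∫_r^∞ f/f' = ∞`. -/
theorem divergence_of_volume_integral
    (f f' : ℝ → ℝ)
    (hderiv : ∀ x ∈ Ici (1:ℝ), HasDerivAt f (f' x) x)
    (hf'cont : ContinuousOn f' (Ici (1:ℝ)))
    (hfpos : ∀ x ∈ Ici (1:ℝ), 0 < f x)
    (hf'pos : ∀ x ∈ Ici (1:ℝ), 0 < f' x)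
    (htop : Tendsto f atTop atTop) :
    (∫⁻ s in Ioi (1:ℝ), ENNReal.ofReal (f s ^ 2 / f' s)) = ⊤ ∧
    (∀ r ≥ (1:ℝ),
      ENNReal.ofReal (f r) * ∫⁻ s in Ioi r, ENNReal.ofReal (f s / f' s) ≤
        ∫⁻ s in Ioi r, ENNReal.ofReal (f s ^ 2 / f' s)) ∧
    Filter.limsup
      (fun r : ℝ => ENNReal.ofReal (f r) * ∫⁻ s in Ioi r, ENNReal.ofReal (f s / f' s))
      atTop = ⊤ :=
  divergence_of_volume_integral_general f f' hderiv hf'cont hfpos hf'pos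
end

section
/- Let ψ, u, v be as in the radial Lane-Emden system with u > 0 decreasing and lim_{r→∞} u(r) = 0. Suppose ∫_0^∞ u'v' ψ^{n-1} dr < ∞ and that there exist r₁, K₁ > 0 with ψ^{n-1}(r)u(r)v'(r) ≤ -K₁ for all r ≥ r₁. Then a contradiction follows: dividing gives ψ^{n-1}u'v' ≥ -K₁ u'/u on [r₁,∞), and integrating yields ∫_{r₁}^r u'v' ψ^{n-1} ds ≥ K₁ log(u(r₁)/u(r)) → +∞ as r → ∞. Hence if ψ^{n-1}uv' ≤ -K₁ eventually and u → 0, then ∫_0^∞ u'v' ψ^{n-1} dr = +∞. -/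
open Filter MeasureTheory Set

/-!
On `[r₁, ∞)` the bound `ψ^{n-1} u v' ≤ -K₁` and `u' < 0` give
`u' v' ψ^{n-1} ≥ K₁ (-u'/u) = (-K₁ log u)'`. Since `u → 0⁺`, the primitive `-K₁ log u` tends to
`+∞`, so its nonnegative derivative cannot be integrable on `(r₁, ∞)`, and neither can the
larger energy density.
-/

/-- If `f' ≥ 0` were integrable on `(a, ∞)`, its primitive `f` would converge. -/
theorem lintegral_Ioi_ofReal_deriv_eq_top_of_tendsto_atTop {f f' : ℝ → ℝ} {a : ℝ}
    (hderiv : ∀ x ∈ Ioi a, HasDerivAt f (f' x) x) (hf' : ∀ x ∈ Ioi a, 0 ≤ f' x)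
    (hf : Tendsto f atTop atTop) :
    ∫⁻ x in Ioi a, ENNReal.ofReal (f' x) = ⊤ := by
  have hmeas : AEStronglyMeasurable f' (volume.restrict (Ioi a)) :=
    (aestronglyMeasurable_deriv f _).congr <|
      (ae_restrict_mem measurableSet_Ioi).mono fun x hx => (hderiv x hx).deriv
  by_contra hfin
  have hint : IntegrableOn f' (Ioi a) :=
    (lintegral_ofReal_ne_top_iff_integrable hmeas
      ((ae_restrict_mem measurableSet_Ioi).mono hf')).1 hfin
  exact not_tendsto_nhds_of_tendsto_atTop hf _
    (tendsto_limUnder_of_hasDerivAt_of_integrableOn_Ioi hderiv hint)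

theorem neg_mul_log_tendsto_atTop {α : Type*} {l : Filter α} {u : α → ℝ} {K : ℝ} (hK : 0 < K)
    (hu : Tendsto u l (nhdsWithin 0 (Ioi 0))) :
    Tendsto (fun x => K * -Real.log (u x)) l atTop :=
  (tendsto_neg_atBot_atTop.comp (Real.tendsto_log_nhdsGT_zero.comp hu)).const_mul_atTop hK

theorem mul_neg_div_le_of_mul_le_neg {p u u' w K : ℝ} (hu : 0 < u) (hu' : u' ≤ 0)
    (h : p * u * w ≤ -K) :
    K * (-u' / u) ≤ u' * w * p := by
  rw [mul_div_assoc', div_le_iff₀ hu]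
  nlinarith [mul_le_mul_of_nonpos_left h hu']

theorem energy_infinite_of_log_divergence_general
    (n : ℕ) (ψ : ℝ → ℝ)
    (u u' v' : ℝ → ℝ)
    (hupos : ∀ r ≥ (0:ℝ), 0 < u r)
    (hu'neg : ∀ r > (0:ℝ), u' r < 0)
    (hud : ∀ r > (0:ℝ), HasDerivAt u (u' r) r)
    (hulim : Tendsto u atTop (nhds 0))
    (r₁ K₁ : ℝ) (hr₁ : 0 < r₁) (hK₁ : 0 < K₁)
    (hbound : ∀ r ≥ r₁, ψ r ^ (n-1) * u r * v' r ≤ -K₁) :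
    (∫⁻ r in Ioi (0:ℝ), ENNReal.ofReal (u' r * v' r * ψ r ^ (n-1))) = ⊤ := by
  have hr₀ : ∀ r ∈ Ioi r₁, 0 < r := fun r hr => hr₁.trans hr
  have hprimitive : ∀ r ∈ Ioi r₁,
      HasDerivAt (fun s => K₁ * -Real.log (u s)) (K₁ * (-u' r / u r)) r := fun r hr => by
    rw [neg_div]
    exact (((hud r (hr₀ r hr)).log (hupos r (hr₀ r hr).le).ne').neg.const_mul K₁)
  have hminorant : ∀ r ∈ Ioi r₁, K₁ * (-u' r / u r) ≤ u' r * v' r * ψ r ^ (n-1) :=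
    fun r hr => mul_neg_div_le_of_mul_le_neg (hupos r (hr₀ r hr).le) (hu'neg r (hr₀ r hr)).le
      (hbound r hr.le)
  have hu0 : Tendsto u atTop (nhdsWithin 0 (Ioi 0)) :=
    tendsto_nhdsWithin_iff.2 ⟨hulim, (eventually_ge_atTop 0).mono hupos⟩
  have hnonneg : ∀ r ∈ Ioi r₁, 0 ≤ K₁ * (-u' r / u r) := fun r hr =>
    mul_nonneg hK₁.le <|
      div_nonneg (neg_nonneg.2 (hu'neg r (hr₀ r hr)).le) (hupos r (hr₀ r hr).le).le
  refine eq_top_mono ?_ <| lintegral_Ioi_ofReal_deriv_eq_top_of_tendsto_atTop hprimitive hnonneg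
    (neg_mul_log_tendsto_atTop hK₁ hu0)
  calc ∫⁻ r in Ioi r₁, ENNReal.ofReal (K₁ * (-u' r / u r))
      ≤ ∫⁻ r in Ioi r₁, ENNReal.ofReal (u' r * v' r * ψ r ^ (n-1)) :=
        setLIntegral_mono' measurableSet_Ioi fun r hr => ENNReal.ofReal_le_ofReal (hminorant r hr)
    _ ≤ ∫⁻ r in Ioi 0, ENNReal.ofReal (u' r * v' r * ψ r ^ (n-1)) :=
        lintegral_mono_set (Ioi_subset_Ioi hr₁.le)

/-- Logarithmic divergence: if `ψ^{n-1} u v' ≤ -K₁` eventually and `u → 0` at infinity,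
then the energy `∫_0^∞ u'v' ψ^{n-1}` is infinite. -/
theorem energy_infinite_of_log_divergence
    (n : ℕ) (hn : 3 ≤ n) (ψ : ℝ → ℝ)
    (hψpos : ∀ r > (0:ℝ), 0 < ψ r)
    (u v u' v' : ℝ → ℝ)
    (hupos : ∀ r ≥ (0:ℝ), 0 < u r) (hvpos : ∀ r ≥ (0:ℝ), 0 < v r)
    (hu'neg : ∀ r > (0:ℝ), u' r < 0) (hv'neg : ∀ r > (0:ℝ), v' r < 0)
    (hud : ∀ r > (0:ℝ), HasDerivAt u (u' r) r)
    (hvd : ∀ r > (0:ℝ), HasDerivAt v (v' r) r)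
    (huanti : AntitoneOn u (Ici 0))
    (hulim : Tendsto u atTop (nhds 0))
    (r₁ K₁ : ℝ) (hr₁ : 0 < r₁) (hK₁ : 0 < K₁)
    (hbound : ∀ r ≥ r₁, ψ r ^ (n-1) * u r * v' r ≤ -K₁) :
    (∫⁻ r in Ioi (0:ℝ), ENNReal.ofReal (u' r * v' r * ψ r ^ (n-1))) = ⊤ :=
  energy_infinite_of_log_divergence_general n ψ u u' v' hupos hu'neg hud hulim r₁ K₁ hr₁ hK₁ hbound
end
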